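/- arXiv:quant-ph/9911117 — 7 statements merged into one kernel-verified Lean document; each statement's English description precedes it below -/
import Mathlib

section
/- Let ρ be a density matrix on ℂ^n ⊗ ℂ^n that does not belong to S_k (i.e. ρ has Schmidt number at least k+1). Then there exists a k-positive Hermiticity-preserving linear map Λ : M_n(ℂ) → M_n(ℂ) such that the matrix (1 ⊗ Λ)(ρ) is not positive semidefinite. -/
open Matrix BigOperators
open scoped ComplexOrder

/-- The `n × n` matrix `M_ψ` associated to a vector `ψ ∈ ℂ^α ⊗ ℂ^β`,
with entries `(M_ψ)_{ij} = ⟨e_i ⊗ e_j, ψ⟩ = ψ (i, j)`. -/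
def matOfVec {α β : Type*} (ψ : α × β → ℂ) : Matrix α β ℂ :=
  Matrix.of fun i j => ψ (i, j)

/-- The Schmidt rank of a bipartite vector is the rank of its associated matrix. -/
noncomputable def schmidtRank {α β : Type*} [Fintype β] (ψ : α × β → ℂ) : ℕ :=
  (matOfVec ψ).rank

/-- `ψ` is a unit vector. -/
def IsUnitVec {γ : Type*} [Fintype γ] (ψ : γ → ℂ) : Prop :=
  ∑ x, Complex.normSq (ψ x) = 1

/-- The outer product `|ψ⟩⟨ψ|`. -/
def outer {γ : Type*} (ψ : γ → ℂ) : Matrix γ γ ℂ :=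
  Matrix.of fun x y => ψ x * star (ψ y)

/-- `ρ ∈ S_k`: `ρ` admits a decomposition `ρ = ∑ i, p i • |ψ i⟩⟨ψ i|` with `p i ≥ 0`,
`∑ i, p i = 1`, each `ψ i` a unit vector of Schmidt rank at most `k`. -/
def InSchmidtClass {α : Type*} [Fintype α] (k : ℕ)
    (ρ : Matrix (α × α) (α × α) ℂ) : Prop :=
  ∃ (m : ℕ) (p : Fin m → ℝ) (ψ : Fin m → α × α → ℂ),
    (∀ i, 0 ≤ p i) ∧ (∑ i, p i) = 1 ∧
    (∀ i, IsUnitVec (ψ i)) ∧ (∀ i, schmidtRank (ψ i) ≤ k) ∧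
    ρ = ∑ i, (p i : ℂ) • outer (ψ i)

/-- The map `1 ⊗ Λ`, applying `Λ` to each block of a matrix indexed by `γ × Fin n`. -/
def blockMap {γ : Type*} {n m : ℕ}
    (Λ : Matrix (Fin n) (Fin n) ℂ → Matrix (Fin m) (Fin m) ℂ)
    (X : Matrix (γ × Fin n) (γ × Fin n) ℂ) : Matrix (γ × Fin m) (γ × Fin m) ℂ :=
  Matrix.of fun a b => Λ (Matrix.of fun s t => X (a.1, s) (b.1, t)) a.2 b.2

/-- `Λ` is Hermiticity-preserving: `Λ(X†) = Λ(X)†`. -/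
def HermPreserving {n m : ℕ}
    (Λ : Matrix (Fin n) (Fin n) ℂ → Matrix (Fin m) (Fin m) ℂ) : Prop :=
  ∀ X, Λ Xᴴ = (Λ X)ᴴ

/-- `Λ` is `k`-positive: `(1 ⊗ Λ)(|ψ⟩⟨ψ|)` is positive semidefinite for every
unit vector `ψ ∈ ℂ^N ⊗ ℂ^N` of Schmidt rank at most `k`. -/
def kPositive {N : ℕ} (k : ℕ)
    (Λ : Matrix (Fin N) (Fin N) ℂ → Matrix (Fin N) (Fin N) ℂ) : Prop :=
  ∀ ψ : Fin N × Fin N → ℂ, IsUnitVec ψ → schmidtRank ψ ≤ k →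
    (blockMap Λ (outer ψ)).PosSemidef

/-! ### Auxiliary machinery -/

section RankClosed

open Finset in
lemma matrix_isClosed_rank_le {ι κ : Type*} [Fintype ι] [Fintype κ] [DecidableEq κ] (k : ℕ) :
    IsClosed {M : Matrix ι κ ℂ | M.rank ≤ k} := by
  classical
  rw [← isOpen_compl_iff]
  have hset : {M : Matrix ι κ ℂ | M.rank ≤ k}ᶜ =
      ⋃ c : Fin (k+1) → κ,
        {M : Matrix ι κ ℂ |
          ((M * (Matrix.of fun j i => if j = c i then (1:ℂ) else 0))ᴴ *
           (M * (Matrix.of fun j i => if j = c i then (1:ℂ) else 0))).det ≠ 0} := by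
    ext M
    simp only [Set.mem_compl_iff, Set.mem_setOf_eq, not_le, Set.mem_iUnion]
    constructor
    · intro hM
      obtain ⟨b, hbs, hbspan, hbli⟩ := exists_linearIndependent ℂ (Set.range Mᵀ)
      have hbfin : b.Finite := (Set.finite_range Mᵀ).subset hbs
      haveI := hbfin.fintype
      have hcard : k + 1 ≤ b.toFinset.card := by
        have h1 : M.rank = Module.finrank ℂ (Submodule.span ℂ b) := by
          rw [Matrix.rank_eq_finrank_span_cols, Matrix.col, hbspan]
        have h2 := finrank_span_set_eq_card (s := b) hbli
        omega
      obtain ⟨e⟩ : Nonempty (Fin (k+1) ↪ b) := by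
        apply Function.Embedding.nonempty_of_card_le
        simpa [Set.toFinset_card] using hcard
      choose c hc using fun i : Fin (k+1) => hbs (e i).2
      have hv : LinearIndependent ℂ (fun i : Fin (k+1) => ((e i : b) : ι → ℂ)) :=
        hbli.comp e e.injective
      refine ⟨c, ?_⟩
      set S : Matrix κ (Fin (k+1)) ℂ := Matrix.of fun j i => if j = c i then (1:ℂ) else 0 with hS
      set B : Matrix ι (Fin (k+1)) ℂ := M * S with hB
      have hBT : Bᵀ = fun i => ((e i : b) : ι → ℂ) := by
        funext i a
        simp only [hB, hS, Matrix.transpose_apply, Matrix.mul_apply, Matrix.of_apply,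
          mul_ite, mul_one, mul_zero]
        rw [Finset.sum_ite_eq' Finset.univ (c i) (fun j => M a j)]
        rw [← hc i]; simp [Matrix.transpose_apply]
      have hrankB : B.rank = k + 1 := by
        rw [Matrix.rank_eq_finrank_span_cols, Matrix.col, hBT, finrank_span_eq_card hv, Fintype.card_fin]
      have hrankG : (Bᴴ * B).rank = k + 1 := by
        rw [Matrix.rank_conjTranspose_mul_self, hrankB]
      have hunit : IsUnit (Bᴴ * B) := by
        rw [← Matrix.mulVec_surjective_iff_isUnit]
        have htop : LinearMap.range (Bᴴ * B).mulVecLin = ⊤ := by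
          apply Submodule.eq_top_of_finrank_eq
          rw [← Matrix.rank] at *
          rw [hrankG]
          simp [Module.finrank_pi, Fintype.card_fin]
        intro y
        have : y ∈ LinearMap.range (Bᴴ * B).mulVecLin := htop ▸ Submodule.mem_top
        obtain ⟨x, hx⟩ := this
        exact ⟨x, hx⟩
      exact ((Matrix.isUnit_iff_isUnit_det _).mp hunit).ne_zero
    · rintro ⟨c, hc⟩
      set S : Matrix κ (Fin (k+1)) ℂ := Matrix.of fun j i => if j = c i then (1:ℂ) else 0 with hS
      set B : Matrix ι (Fin (k+1)) ℂ := M * S with hB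
      have hunit : IsUnit (Bᴴ * B) :=
        (Matrix.isUnit_iff_isUnit_det _).mpr (isUnit_iff_ne_zero.mpr hc)
      have h1 : (Bᴴ * B).rank = k + 1 := by
        rw [Matrix.rank_of_isUnit _ hunit, Fintype.card_fin]
      have h2 : (Bᴴ * B).rank ≤ B.rank := Matrix.rank_mul_le_right _ _
      have h3 : B.rank ≤ M.rank := Matrix.rank_mul_le_left _ _
      omega
  rw [hset]
  apply isOpen_iUnion
  intro c
  have hcont : Continuous fun M : Matrix ι κ ℂ =>
      ((M * (Matrix.of fun j i => if j = c i then (1:ℂ) else 0))ᴴ *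
       (M * (Matrix.of fun j i => if j = c i then (1:ℂ) else 0))).det :=
    (((continuous_id.matrix_mul continuous_const).matrix_conjTranspose).matrix_mul
      (continuous_id.matrix_mul continuous_const)).matrix_det
  exact (isOpen_compl_singleton (x := (0:ℂ))).preimage hcont

end RankClosed

section Compactness

lemma real_smul_mat {a b : Type*} (r : ℝ) (M : Matrix a b ℂ) : (r : ℂ) • M = r • M := by
  ext i j; simp [Matrix.smul_apply, Complex.real_smul]

def Tset (n k : ℕ) : Set ((Fin n × Fin n) → ℂ) :=
  {ψ | IsUnitVec ψ ∧ schmidtRank ψ ≤ k}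

def Pset (n k : ℕ) : Set (Matrix (Fin n × Fin n) (Fin n × Fin n) ℂ) :=
  outer '' Tset n k

lemma isCompact_Tset (n k : ℕ) : IsCompact (Tset n k) := by
  have hclosed : IsClosed (Tset n k) := by
    have h1 : IsClosed {ψ : (Fin n × Fin n) → ℂ | IsUnitVec ψ} := by
      have hc : Continuous fun ψ : (Fin n × Fin n) → ℂ => ∑ x, Complex.normSq (ψ x) :=
        continuous_finset_sum _ fun x _ =>
          Complex.continuous_normSq.comp (continuous_apply x)
      exact isClosed_eq hc continuous_const
    have h2 : IsClosed {ψ : (Fin n × Fin n) → ℂ | schmidtRank ψ ≤ k} := by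
      have hc : Continuous fun ψ : (Fin n × Fin n) → ℂ => matOfVec (α := Fin n) ψ :=
        continuous_pi fun i => continuous_pi fun j => continuous_apply (i, j)
      exact (matrix_isClosed_rank_le k).preimage hc
    exact h1.inter h2
  have hbdd : Bornology.IsBounded (Tset n k) := by
    apply Bornology.IsBounded.subset (Metric.isBounded_closedBall (x := 0) (r := 1))
    intro ψ hψ
    simp only [Metric.mem_closedBall, dist_zero_right]
    apply pi_norm_le_iff_of_nonneg zero_le_one |>.mpr
    intro x
    have h1 : Complex.normSq (ψ x) ≤ 1 := by
      have := hψ.1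
      have hle : Complex.normSq (ψ x) ≤ ∑ y, Complex.normSq (ψ y) :=
        Finset.single_le_sum (fun y _ => Complex.normSq_nonneg (ψ y)) (Finset.mem_univ x)
      rw [this] at hle; exact hle
    have h2 : ‖ψ x‖ ^ 2 ≤ 1 := by rwa [← Complex.sq_norm] at h1
    nlinarith [norm_nonneg (ψ x)]
  exact Metric.isCompact_of_isClosed_isBounded hclosed hbdd

lemma continuous_outer {γ : Type*} [Fintype γ] :
    Continuous fun ψ : γ → ℂ => outer ψ :=
  continuous_pi fun x => continuous_pi fun y =>
    ((continuous_apply x).mul ((continuous_apply y).star))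

lemma Tset_nonempty {n k : ℕ} (hn : 0 < n) (hk : 1 ≤ k) : (Tset n k).Nonempty := by
  classical
  set i0 : Fin n := ⟨0, hn⟩
  refine ⟨fun p => if p = (i0, i0) then 1 else 0, ?_, ?_⟩
  · unfold IsUnitVec
    rw [Finset.sum_eq_single (i0, i0)] <;> simp +contextual
  · unfold schmidtRank
    have hfac : matOfVec (fun p : Fin n × Fin n => if p = (i0, i0) then (1:ℂ) else 0) =
        (Matrix.of fun i (_ : Fin 1) => if i = i0 then (1:ℂ) else 0) *
        (Matrix.of fun (_ : Fin 1) j => if j = i0 then (1:ℂ) else 0) := by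
      ext i j
      simp only [matOfVec, Matrix.mul_apply, Matrix.of_apply, Fin.sum_univ_one, Prod.ext_iff,
        Set.mem_setOf_eq, Prod.mk.injEq]
      by_cases h1 : i = i0 <;> by_cases h2 : j = i0 <;> simp [h1, h2, ite_and]
    rw [hfac]
    refine le_trans (le_trans (Matrix.rank_mul_le_left _ _) (Matrix.rank_le_card_width _)) ?_
    simpa using hk

lemma isCompact_hull {n k : ℕ} (hn : 0 < n) (hk : 1 ≤ k) :
    IsCompact (convexHull ℝ (Pset n k)) := by
  classical
  haveI : FiniteDimensional ℝ (Matrix (Fin n × Fin n) (Fin n × Fin n) ℂ) := by infer_instance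
  set N := Module.finrank ℝ (Matrix (Fin n × Fin n) (Fin n × Fin n) ℂ) + 1 with hN
  set g : ((Fin N → ℝ) × (Fin N → (Fin n × Fin n) → ℂ)) →
      Matrix (Fin n × Fin n) (Fin n × Fin n) ℂ :=
    fun wψ => ∑ i, wψ.1 i • outer (wψ.2 i) with hg
  set A : Set ((Fin N → ℝ) × (Fin N → (Fin n × Fin n) → ℂ)) :=
    (stdSimplex ℝ (Fin N)) ×ˢ (Set.univ.pi fun _ => Tset n k) with hA
  have hAcomp : IsCompact A :=
    (isCompact_stdSimplex _ _).prod (isCompact_univ_pi fun _ => isCompact_Tset n k)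
  have hgcont : Continuous g := by
    apply continuous_finset_sum
    intro i _
    exact (((continuous_apply i).comp continuous_fst)).smul
      (continuous_outer.comp ((continuous_apply i).comp continuous_snd))
  have himg : convexHull ℝ (Pset n k) = g '' A := by
    apply Set.Subset.antisymm
    · intro x hx
      obtain ⟨ι, hι, z, w, hzP, haff, hwpos, hwsum, hxeq⟩ :=
        eq_pos_convex_span_of_mem_convexHull hx
      have hcard : Fintype.card ι ≤ N := by
        have h1 := haff.card_le_finrank_succ
        have h2 : Module.finrank ℝ (vectorSpan ℝ (Set.range z)) ≤
            Module.finrank ℝ (Matrix (Fin n × Fin n) (Fin n × Fin n) ℂ) :=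
          Submodule.finrank_le _
        omega
      obtain ⟨e⟩ : Nonempty (ι ↪ Fin N) :=
        Function.Embedding.nonempty_of_card_le (by simpa using hcard)
      obtain ⟨ψ₀, hψ₀⟩ := Tset_nonempty hn hk
      have hz' : ∀ i : ι, ∃ t, t ∈ Tset n k ∧ outer t = z i := fun i =>
        (Set.mem_image _ _ _).mp (hzP (Set.mem_range_self i))
      choose t ht hzt using hz'
      set w' : Fin N → ℝ := fun j => if h : ∃ i, e i = j then w h.choose else 0 with hw'
      set ψ' : Fin N → (Fin n × Fin n) → ℂ :=
        fun j => if h : ∃ i, e i = j then t h.choose else ψ₀ with hψ'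
      have collapse : ∀ {β : Type} [AddCommMonoid β] (G : Fin N → β) (H : ι → β),
          (∀ j, (¬ ∃ i, e i = j) → G j = 0) → (∀ i, G (e i) = H i) →
          ∑ j, G j = ∑ i, H i := by
        intro β _ G H hG0 hGH
        rw [← Finset.sum_subset (Finset.subset_univ (Finset.univ.image e))
          (fun j _ hj => hG0 j (by simpa [Finset.mem_image] using hj))]
        rw [Finset.sum_image (fun a _ b _ hab => e.injective hab)]
        exact Finset.sum_congr rfl fun i _ => hGH i
      have hchoose : ∀ i : ι, (⟨i, rfl⟩ : ∃ i', e i' = e i).choose = i := fun i =>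
        e.injective (⟨i, rfl⟩ : ∃ i', e i' = e i).choose_spec
      refine ⟨(w', ψ'), ⟨⟨fun j => ?_, ?_⟩, fun j _ => ?_⟩, ?_⟩
      · by_cases h : ∃ i, e i = j
        · simpa [hw', dif_pos h] using (hwpos h.choose).le
        · simp [hw', dif_neg h]
      · refine (collapse w' w (fun j hj => by simp [hw', dif_neg hj]) fun i => ?_).trans hwsum
        have h : ∃ i', e i' = e i := ⟨i, rfl⟩
        simp only [hw', dif_pos h, hchoose i]
      · by_cases h : ∃ i, e i = j
        · simpa [hψ', dif_pos h] using ht h.choose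
        · simpa [hψ', dif_neg h] using hψ₀
      · refine (collapse (fun j => w' j • outer (ψ' j)) (fun i => w i • z i)
          (fun j hj => by simp [hw', dif_neg hj]) fun i => ?_).trans hxeq
        have h : ∃ i', e i' = e i := ⟨i, rfl⟩
        simp only [hw', hψ', dif_pos h, hchoose i, hzt i]
    · rintro x ⟨⟨w, ψs⟩, ⟨hw, hψs⟩, rfl⟩
      exact Convex.sum_mem (convex_convexHull _ _) (fun i _ => hw.1 i) hw.2
        (fun i _ => subset_convexHull _ _ ⟨ψs i, hψs i (Set.mem_univ i), rfl⟩)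
  rw [himg]
  exact hAcomp.image hgcont

end Compactness


section Pairing
variable {q : Type*} [Fintype q] [DecidableEq q]

noncomputable def Wof (f : Matrix q q ℂ →ₗ[ℝ] ℝ) : Matrix q q ℂ :=
  Matrix.of fun x y => (f (Matrix.single x y 1) : ℂ) +
    Complex.I * (f (Matrix.single x y Complex.I) : ℂ)

lemma Wof_re_eq (f : Matrix q q ℂ →ₗ[ℝ] ℝ) (X : Matrix q q ℂ) :
    (∑ x, ∑ y, (starRingEnd ℂ) (Wof f x y) * X x y).re = f X := by
  have hX : X = ∑ x : q, ∑ y : q, ((X x y).re • Matrix.single x y (1:ℂ) +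
      (X x y).im • Matrix.single x y Complex.I) := by
    conv_lhs => rw [Matrix.matrix_eq_sum_single X]
    refine Finset.sum_congr rfl fun x _ => Finset.sum_congr rfl fun y _ => ?_
    ext a b
    simp only [Matrix.single, Matrix.of_apply, Matrix.add_apply, Matrix.smul_apply,
      smul_eq_mul, Complex.real_smul]
    by_cases h1 : x = a <;> by_cases h2 : y = b <;> simp [h1, h2]
  conv_rhs => rw [hX]
  rw [map_sum, Complex.re_sum]
  refine Finset.sum_congr rfl fun x _ => ?_
  rw [map_sum, Complex.re_sum]
  refine Finset.sum_congr rfl fun y _ => ?_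
  rw [map_add, f.map_smul, f.map_smul]
  simp only [Wof, Matrix.of_apply, smul_eq_mul]
  simp only [map_add, _root_.map_mul, Complex.conj_ofReal, Complex.conj_I]
  simp [Complex.mul_re, Complex.add_re, Complex.add_im, Complex.ofReal_re, Complex.ofReal_im,
    Complex.I_re, Complex.I_im, Complex.mul_im]
  ring

lemma traceForm_eq (f : Matrix q q ℂ →ₗ[ℝ] ℝ) (σ : Matrix q q ℂ) (hσ : σ.IsHermitian) :
    (((1/2 : ℂ) • (Wof f + (Wof f)ᴴ)) * σ).trace = (f σ : ℂ) := by
  set W := Wof f with hW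
  set z : ℂ := ∑ x, ∑ y, (starRingEnd ℂ) (W x y) * σ x y with hz
  have h1 : ((Wᴴ : Matrix q q ℂ) * σ).trace = z := by
    rw [Matrix.trace]
    simp only [Matrix.diag_apply, Matrix.mul_apply, Matrix.conjTranspose_apply]
    rw [Finset.sum_comm]
    refine Finset.sum_congr rfl fun x _ => Finset.sum_congr rfl fun y _ => rfl
  have h2 : (W * σ).trace = (starRingEnd ℂ) z := by
    rw [Matrix.trace, hz, map_sum]
    simp only [Matrix.diag_apply, Matrix.mul_apply, map_sum, _root_.map_mul,
      Complex.conj_conj]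
    refine Finset.sum_congr rfl fun x _ => Finset.sum_congr rfl fun y _ => ?_
    have hs : σ y x = (starRingEnd ℂ) (σ x y) := by
      conv_lhs => rw [← hσ]
      rfl
    rw [hs]
  rw [Matrix.smul_mul, Matrix.add_mul, Matrix.trace_smul, Matrix.trace_add, h1, h2]
  have h3 : z + (starRingEnd ℂ) z = ((2 * z.re : ℝ) : ℂ) := Complex.add_conj z
  rw [add_comm z] at h3
  rw [smul_eq_mul, h3, Wof_re_eq f σ]
  push_cast
  ring

end Pairing
def swapC {α : Type*} (ρ : Matrix (α × α) (α × α) ℂ) : Matrix (α × α) (α × α) ℂ :=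
  Matrix.of fun p q => (starRingEnd ℂ) (ρ (p.2, p.1) (q.2, q.1))

section swap
variable {α : Type*} [Fintype α] [DecidableEq α] {k : ℕ}

lemma swapC_swapC (ρ : Matrix (α × α) (α × α) ℂ) : swapC (swapC ρ) = ρ := by
  ext ⟨a, b⟩ ⟨c, d⟩
  simp [swapC]

lemma swapC_herm {ρ : Matrix (α × α) (α × α) ℂ} (h : ρ.IsHermitian) :
    (swapC ρ).IsHermitian := by
  ext p q
  have h1 : star (ρ (p.2, p.1) (q.2, q.1)) = ρ (q.2, q.1) (p.2, p.1) :=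
    congrFun (congrFun h (q.2, q.1)) (p.2, p.1)
  show star ((starRingEnd ℂ) (ρ (q.2, q.1) (p.2, p.1))) = (starRingEnd ℂ) (ρ (p.2, p.1) (q.2, q.1))
  rw [← h1]
  simp [Complex.star_def]

lemma swapC_trace (ρ : Matrix (α × α) (α × α) ℂ) : (swapC ρ).trace = (starRingEnd ℂ) ρ.trace := by
  unfold Matrix.trace swapC
  rw [map_sum]
  rw [← Equiv.sum_comp (Equiv.prodComm α α)]
  simp [Matrix.diag]

lemma swapC_outer (ψ : α × α → ℂ) :
    swapC (outer ψ) = outer (fun p => (starRingEnd ℂ) (ψ (p.2, p.1))) := by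
  ext ⟨a, b⟩ ⟨c, d⟩
  simp [swapC, outer, mul_comm]

lemma swapC_inSchmidtClass {ρ : Matrix (α × α) (α × α) ℂ}
    (h : InSchmidtClass k (swapC ρ)) : InSchmidtClass k ρ := by
  obtain ⟨m, p, ψ, hp, hs, hu, hr, heq⟩ := h
  refine ⟨m, p, fun i p' => (starRingEnd ℂ) (ψ i (p'.2, p'.1)), hp, hs, fun i => ?_, fun i => ?_, ?_⟩
  · unfold IsUnitVec at *
    rw [← Equiv.sum_comp (Equiv.prodComm α α)]
    simpa using hu i
  · unfold schmidtRank at *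
    have : matOfVec (fun p' : α × α => (starRingEnd ℂ) (ψ i (p'.2, p'.1))) = (matOfVec (ψ i))ᴴ := by
      ext a b; simp [matOfVec, Matrix.conjTranspose_apply]
    rw [this, Matrix.rank_conjTranspose]
    exact hr i
  · have h2 : ρ = swapC (swapC ρ) := (swapC_swapC ρ).symm
    rw [h2, heq]
    ext ⟨a, b⟩ ⟨c, d⟩
    simp only [swapC, Matrix.of_apply, Matrix.sum_apply, map_sum, Matrix.smul_apply, outer,
      smul_eq_mul, _root_.map_mul, Complex.conj_ofReal]
    refine Finset.sum_congr rfl fun i _ => ?_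
    simp only [Complex.star_def, Complex.conj_conj]

end swap
section conv
variable {α : Type*} [Fintype α] {k : ℕ}

lemma convex_schmidtClass : Convex ℝ {ρ : Matrix (α × α) (α × α) ℂ | InSchmidtClass k ρ} := by
  rintro x ⟨m₁, p₁, ψ₁, hp₁, hs₁, hu₁, hr₁, hx⟩ y ⟨m₂, p₂, ψ₂, hp₂, hs₂, hu₂, hr₂, hy⟩
    a b ha hb hab
  refine ⟨m₁ + m₂, Fin.append (fun i => a * p₁ i) (fun i => b * p₂ i),
    Fin.append ψ₁ ψ₂, fun i => ?_, ?_, fun i => ?_, fun i => ?_, ?_⟩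
  · refine Fin.addCases (fun j => ?_) (fun j => ?_) i
    · simpa [Fin.append_left] using mul_nonneg ha (hp₁ j)
    · simpa [Fin.append_right] using mul_nonneg hb (hp₂ j)
  · rw [Fin.sum_univ_add]
    simp only [Fin.append_left, Fin.append_right, ← Finset.mul_sum, hs₁, hs₂]
    simpa using hab
  · refine Fin.addCases (fun j => ?_) (fun j => ?_) i
    · simpa [Fin.append_left] using hu₁ j
    · simpa [Fin.append_right] using hu₂ j
  · refine Fin.addCases (fun j => ?_) (fun j => ?_) i
    · simpa [Fin.append_left] using hr₁ j
    · simpa [Fin.append_right] using hr₂ j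
  · rw [Fin.sum_univ_add]
    simp only [Fin.append_left, Fin.append_right]
    rw [hx, hy, Finset.smul_sum, Finset.smul_sum]
    congr 1 <;> refine Finset.sum_congr rfl fun i _ => ?_ <;>
    · ext pq rs
      simp only [Matrix.smul_apply, smul_eq_mul, Complex.real_smul, Complex.ofReal_mul]
      ring

lemma singleton_schmidtClass {ψ : α × α → ℂ} (hu : IsUnitVec ψ) (hr : schmidtRank ψ ≤ k) :
    InSchmidtClass k (outer ψ) := by
  refine ⟨1, fun _ => 1, fun _ => ψ, fun _ => zero_le_one, by simp, fun _ => hu,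
    fun _ => hr, by simp⟩

end conv
section lam
variable {n : ℕ}

noncomputable def LamV (V : Matrix (Fin n × Fin n) (Fin n × Fin n) ℂ) :
    Matrix (Fin n) (Fin n) ℂ →ₗ[ℂ] Matrix (Fin n) (Fin n) ℂ where
  toFun X := Matrix.of fun kk ll => ∑ s, ∑ t, X s t * V (s, kk) (t, ll)
  map_add' X Y := by
    ext kk ll
    simp [Matrix.add_apply, add_mul, Finset.sum_add_distrib]
  map_smul' c X := by
    ext kk ll
    simp [Matrix.smul_apply, smul_eq_mul, Finset.mul_sum, mul_assoc]

def Tm (ψ : Fin n × Fin n → ℂ) : Matrix (Fin n × Fin n) (Fin n × Fin n) ℂ :=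
  Matrix.of fun p r => if p.2 = r.2 then (starRingEnd ℂ) (ψ (r.1, p.1)) else 0

lemma sum4_comm {M : Type*} [AddCommMonoid M] {ι₁ ι₂ ι₃ ι₄ : Type*}
    [Fintype ι₁] [Fintype ι₂] [Fintype ι₃] [Fintype ι₄]
    (F : ι₁ → ι₂ → ι₃ → ι₄ → M) :
    ∑ a, ∑ b, ∑ s, ∑ t, F a b s t = ∑ s, ∑ a, ∑ t, ∑ b, F a b s t :=
  calc ∑ a, ∑ b, ∑ s, ∑ t, F a b s t
      = ∑ a, ∑ s, ∑ b, ∑ t, F a b s t :=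
        Finset.sum_congr rfl fun a _ => Finset.sum_comm
    _ = ∑ s, ∑ a, ∑ b, ∑ t, F a b s t := Finset.sum_comm
    _ = ∑ s, ∑ a, ∑ t, ∑ b, F a b s t :=
        Finset.sum_congr rfl fun s _ => Finset.sum_congr rfl fun a _ => Finset.sum_comm

lemma blockMap_factor (V : Matrix (Fin n × Fin n) (Fin n × Fin n) ℂ)
    (ψ : Fin n × Fin n → ℂ) :
    blockMap (⇑(LamV V)) (outer ψ) = (Tm ψ)ᴴ * V * (Tm ψ) := by
  ext ⟨a, kk⟩ ⟨b, ll⟩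
  show ∑ s, ∑ t, outer ψ (a, s) (b, t) * V (s, kk) (t, ll) = _
  simp only [Matrix.mul_apply, Matrix.conjTranspose_apply, Tm, Matrix.of_apply,
    Fintype.sum_prod_type, outer]
  simp only [apply_ite (star ·), star_zero, ite_mul, zero_mul, mul_ite, mul_zero,
    Finset.sum_ite_eq', Finset.mem_univ, if_true]
  rw [Finset.sum_comm]
  refine Finset.sum_congr rfl fun t _ => ?_
  rw [Finset.sum_mul]
  refine Finset.sum_congr rfl fun s _ => ?_
  simp only [Complex.star_def, Complex.conj_conj]
  ring

lemma dot_factor (T V : Matrix (Fin n × Fin n) (Fin n × Fin n) ℂ) (v : Fin n × Fin n → ℂ) :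
    star v ⬝ᵥ ((Tᴴ * V * T) *ᵥ v) = star (T *ᵥ v) ⬝ᵥ (V *ᵥ (T *ᵥ v)) := by
  rw [Matrix.star_mulVec, Matrix.dotProduct_mulVec, Matrix.dotProduct_mulVec,
    Matrix.dotProduct_mulVec, Matrix.vecMul_vecMul, Matrix.vecMul_vecMul, Matrix.mul_assoc]

lemma dot_outer_trace {γ : Type*} [Fintype γ] (V : Matrix γ γ ℂ) (u : γ → ℂ) :
    star u ⬝ᵥ (V *ᵥ u) = (V * outer u).trace := by
  simp only [dotProduct, Matrix.mulVec, Matrix.trace, Matrix.diag_apply,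
    Matrix.mul_apply, outer, Matrix.of_apply, Pi.star_apply, Finset.mul_sum]
  refine Finset.sum_congr rfl fun x _ => Finset.sum_congr rfl fun y _ => ?_
  ring

lemma Tm_mulVec (ψ v : Fin n × Fin n → ℂ) :
    Tm ψ *ᵥ v = fun p => ∑ b, (starRingEnd ℂ) (ψ (b, p.1)) * v (b, p.2) := by
  funext ⟨t, l⟩
  simp only [Matrix.mulVec, dotProduct, Tm, Matrix.of_apply, Fintype.sum_prod_type,
    ite_mul, zero_mul, Finset.sum_ite_eq, Finset.mem_univ, if_true]

lemma matOfVec_Tm_mulVec (ψ v : Fin n × Fin n → ℂ) :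
    matOfVec (Tm ψ *ᵥ v) = (matOfVec ψ)ᴴ * matOfVec v := by
  rw [Tm_mulVec]
  ext t l
  simp [matOfVec, Matrix.mul_apply, Matrix.conjTranspose_apply, Complex.star_def]

lemma hermPreserving_LamV (V : Matrix (Fin n × Fin n) (Fin n × Fin n) ℂ) (hV : Vᴴ = V) :
    HermPreserving (⇑(LamV V)) := by
  intro X
  ext kk ll
  show (∑ s, ∑ t, Xᴴ s t * V (s, kk) (t, ll)) = star (∑ s, ∑ t, X s t * V (s, ll) (t, kk))
  rw [star_sum]
  rw [Finset.sum_comm]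
  refine Finset.sum_congr rfl fun t _ => ?_
  rw [star_sum]
  refine Finset.sum_congr rfl fun s _ => ?_
  rw [star_mul', Matrix.conjTranspose_apply]
  congr 1
  have h2 : star (V (t, ll) (s, kk)) = Vᴴ (s, kk) (t, ll) := rfl
  rw [h2, hV]

lemma omega_dot (V ρ : Matrix (Fin n × Fin n) (Fin n × Fin n) ℂ) (hρ : ρ.IsHermitian) :
    star (fun p : Fin n × Fin n => if p.1 = p.2 then (1:ℂ) else 0) ⬝ᵥ
      ((blockMap (⇑(LamV V)) ρ) *ᵥ (fun p : Fin n × Fin n => if p.1 = p.2 then (1:ℂ) else 0))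
    = (V * swapC ρ).trace := by
  have hLHS : star (fun p : Fin n × Fin n => if p.1 = p.2 then (1:ℂ) else 0) ⬝ᵥ
      ((blockMap (⇑(LamV V)) ρ) *ᵥ (fun p : Fin n × Fin n => if p.1 = p.2 then (1:ℂ) else 0))
      = ∑ a, ∑ b, ∑ s, ∑ t, ρ (a, s) (b, t) * V (s, a) (t, b) := by
    simp only [dotProduct, Matrix.mulVec, Pi.star_apply, Fintype.sum_prod_type,
      apply_ite (star ·), star_one, star_zero, ite_mul, one_mul, zero_mul,
      mul_ite, mul_one, mul_zero, Finset.sum_ite_eq, Finset.mem_univ, if_true]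
    refine Finset.sum_congr rfl fun a _ => Finset.sum_congr rfl fun b _ => rfl
  rw [hLHS]
  have hRHS : (V * swapC ρ).trace = ∑ s, ∑ a, ∑ t, ∑ b, ρ (a, s) (b, t) * V (s, a) (t, b) := by
    simp only [Matrix.trace, Matrix.diag_apply, Matrix.mul_apply, swapC, Matrix.of_apply,
      Fintype.sum_prod_type]
    refine Finset.sum_congr rfl fun s _ => Finset.sum_congr rfl fun a _ =>
      Finset.sum_congr rfl fun t _ => Finset.sum_congr rfl fun b _ => ?_
    have h1 : (starRingEnd ℂ) (ρ (b, t) (a, s)) = ρ (a, s) (b, t) := by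
      have h2 : (starRingEnd ℂ) (ρ (b, t) (a, s)) = ρᴴ (a, s) (b, t) := rfl
      rw [h2, hρ]
    rw [h1]
    ring
  rw [hRHS, sum4_comm]

lemma trace_outer {γ : Type*} [Fintype γ] (ψ : γ → ℂ) :
    (outer ψ).trace = ((∑ x, Complex.normSq (ψ x) : ℝ) : ℂ) := by
  simp only [Matrix.trace, Matrix.diag_apply, outer, Matrix.of_apply, Complex.star_def,
    Complex.mul_conj]
  push_cast
  rfl

end lam

section Main

attribute [local instance] Matrix.normedAddCommGroup Matrix.normedSpace

lemma outer_isHermitian {γ : Type*} (ψ : γ → ℂ) : (outer ψ).IsHermitian := by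
  ext x y
  simp [outer, Matrix.conjTranspose_apply, star_mul', mul_comm]

/-- If a density matrix `ρ` on `ℂ^n ⊗ ℂ^n` is not in `S_k`, then there is a
`k`-positive Hermiticity-preserving linear map `Λ` with `(1 ⊗ Λ)(ρ)` not positive semidefinite. -/
theorem exists_kPositive_witness {n k : ℕ} (hk : 1 ≤ k)
    (ρ : Matrix (Fin n × Fin n) (Fin n × Fin n) ℂ)
    (hρ : ρ.PosSemidef) (hτ : ρ.trace = 1)
    (hS : ¬ InSchmidtClass k ρ) :
    ∃ Λ : Matrix (Fin n) (Fin n) ℂ →ₗ[ℂ] Matrix (Fin n) (Fin n) ℂ,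
      HermPreserving (⇑Λ) ∧ kPositive k (⇑Λ) ∧ ¬ (blockMap (⇑Λ) ρ).PosSemidef := by
  classical
  rcases Nat.eq_zero_or_pos n with hn0 | hn
  · exfalso
    subst hn0
    rw [Matrix.trace] at hτ
    simp at hτ
  have hρH : ρ.IsHermitian := hρ.1
  have hρ'H : (swapC ρ).IsHermitian := swapC_herm hρH
  have hρ'tr : (swapC ρ).trace = 1 := by rw [swapC_trace, hτ]; simp
  have hhull : swapC ρ ∉ convexHull ℝ (Pset n k) := by
    intro hmem
    have hsub : convexHull ℝ (Pset n k) ⊆ {σ | InSchmidtClass k σ} :=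
      convexHull_min (by rintro σ ⟨ψ, ⟨h1, h2⟩, rfl⟩; exact singleton_schmidtClass h1 h2)
        convex_schmidtClass
    exact hS (swapC_inSchmidtClass (hsub hmem))
  haveI : LocallyConvexSpace ℝ (Matrix (Fin n × Fin n) (Fin n × Fin n) ℂ) :=
    NormedSpace.toLocallyConvexSpace
  obtain ⟨f, u0, hfC, hfρ'⟩ := geometric_hahn_banach_closed_point
    (convex_convexHull ℝ (Pset n k)) (isCompact_hull hn hk).isClosed hhull
  set g : Matrix (Fin n × Fin n) (Fin n × Fin n) ℂ →L[ℝ] ℝ := -f with hgdef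
  set cc : ℝ := -u0 with hccdef
  have hgC : ∀ a ∈ convexHull ℝ (Pset n k), cc < g a := fun a ha => by
    simpa [hgdef, hccdef] using neg_lt_neg (hfC a ha)
  have hgρ' : g (swapC ρ) < cc := by
    simpa [hgdef, hccdef] using neg_lt_neg hfρ'
  set W : Matrix (Fin n × Fin n) (Fin n × Fin n) ℂ := Wof (g : _ →ₗ[ℝ] ℝ) with hWdef
  set V : Matrix (Fin n × Fin n) (Fin n × Fin n) ℂ :=
    (1/2 : ℂ) • (W + Wᴴ) - (cc : ℂ) • 1 with hVdef
  have hVH : Vᴴ = V := by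
    rw [hVdef]
    simp only [Matrix.conjTranspose_sub, Matrix.conjTranspose_smul, Matrix.conjTranspose_add,
      Matrix.conjTranspose_conjTranspose, Matrix.conjTranspose_one]
    rw [add_comm Wᴴ W]
    congr 1
    · congr 1
      simp [Complex.star_def, map_div₀]
    · congr 1
      simp [Complex.star_def, Complex.conj_ofReal]
  have hpair : ∀ σ : Matrix (Fin n × Fin n) (Fin n × Fin n) ℂ, σ.IsHermitian →
      (V * σ).trace = ((g σ : ℝ) : ℂ) - (cc : ℂ) * σ.trace := by
    intro σ hσ
    rw [hVdef, hWdef, Matrix.sub_mul, Matrix.trace_sub, traceForm_eq (g : _ →ₗ[ℝ] ℝ) σ hσ]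
    congr 1
    rw [Matrix.smul_mul, Matrix.one_mul, Matrix.trace_smul, smul_eq_mul]
  have hpos : ∀ u : Fin n × Fin n → ℂ, schmidtRank u ≤ k → 0 ≤ (V * outer u).trace := by
    intro u hu
    by_cases h0 : u = 0
    · subst h0
      have hz : outer (0 : Fin n × Fin n → ℂ) = 0 := by ext x y; simp [outer]
      rw [hz, Matrix.mul_zero, Matrix.trace_zero]
    · set s := ∑ x, Complex.normSq (u x) with hsdef
      have hs : 0 < s := by
        obtain ⟨x, hx⟩ : ∃ x, u x ≠ 0 := by
          by_contra hall; push_neg at hall; exact h0 (funext hall)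
        exact Finset.sum_pos' (fun y _ => Complex.normSq_nonneg _)
          ⟨x, Finset.mem_univ x, Complex.normSq_pos.mpr hx⟩
      set r := Real.sqrt s with hrdef
      have hr : 0 < r := Real.sqrt_pos.mpr hs
      have hrr : r * r = s := Real.mul_self_sqrt hs.le
      have hrc : (r : ℂ) ≠ 0 := Complex.ofReal_ne_zero.mpr hr.ne'
      set ψu : Fin n × Fin n → ℂ := fun x => (r : ℂ)⁻¹ * u x with hψudef
      have hunit : IsUnitVec ψu := by
        unfold IsUnitVec
        have : ∀ x, Complex.normSq (ψu x) = s⁻¹ * Complex.normSq (u x) := by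
          intro x
          rw [hψudef]
          rw [Complex.normSq_mul, Complex.normSq_inv, Complex.normSq_ofReal, hrr]
        simp only [this, ← Finset.mul_sum, ← hsdef]
        exact inv_mul_cancel₀ hs.ne'
      have hrank : schmidtRank ψu ≤ k := by
        unfold schmidtRank at *
        have hsm : matOfVec ψu = (r : ℂ)⁻¹ • matOfVec u := by
          ext i j; simp [matOfVec, hψudef]
        rw [hsm, Matrix.smul_eq_diagonal_mul]
        exact le_trans (Matrix.rank_mul_le_right _ _) hu
      have houter : outer u = ((s : ℝ) : ℂ) • outer ψu := by
        ext x y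
        simp only [outer, Matrix.of_apply, Matrix.smul_apply, smul_eq_mul, hψudef,
          Complex.star_def, _root_.map_mul, map_inv₀, Complex.conj_ofReal]
        have hsc : ((s : ℝ) : ℂ) = (r : ℂ) * (r : ℂ) := by
          rw [← hrr]; push_cast; ring
        rw [hsc]
        field_simp
      have hmem : outer ψu ∈ convexHull ℝ (Pset n k) :=
        subset_convexHull _ _ ⟨ψu, ⟨hunit, hrank⟩, rfl⟩
      have htr1 : (outer ψu).trace = 1 := by
        rw [trace_outer, hunit, Complex.ofReal_one]
      have hval : (V * outer u).trace = ((s * (g (outer ψu) - cc) : ℝ) : ℂ) := by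
        rw [houter, Matrix.mul_smul, Matrix.trace_smul, hpair _ (outer_isHermitian ψu), htr1,
          mul_one, smul_eq_mul]
        push_cast
        ring
      rw [hval, Complex.zero_le_real]
      have := hgC _ hmem
      nlinarith
  refine ⟨LamV V, hermPreserving_LamV V hVH, ?_, ?_⟩
  · intro ψ hψu hψr
    rw [blockMap_factor]
    refine Matrix.posSemidef_iff_dotProduct_mulVec.mpr ⟨?_, ?_⟩
    · show _ᴴ = _
      simp only [Matrix.conjTranspose_mul, Matrix.conjTranspose_conjTranspose, hVH,
        Matrix.mul_assoc]
    · intro x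
      rw [dot_factor, dot_outer_trace]
      apply hpos
      show (matOfVec (Tm ψ *ᵥ x)).rank ≤ k
      rw [matOfVec_Tm_mulVec]
      calc ((matOfVec ψ)ᴴ * matOfVec x).rank ≤ (matOfVec ψ)ᴴ.rank :=
            Matrix.rank_mul_le_left _ _
        _ = (matOfVec ψ).rank := Matrix.rank_conjTranspose _
        _ ≤ k := hψr
  · intro hPSD
    have h2 := hPSD.dotProduct_mulVec_nonneg (fun p : Fin n × Fin n => if p.1 = p.2 then (1:ℂ) else 0)
    rw [omega_dot V ρ hρH, hpair _ hρ'H, hρ'tr, mul_one] at h2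
    have h3 : ((g (swapC ρ) : ℝ) : ℂ) - (cc : ℂ) = ((g (swapC ρ) - cc : ℝ) : ℂ) := by
      push_cast; ring
    rw [h3, Complex.zero_le_real] at h2
    linarith

end Main
end

section
/- For every k ≥ 1 and every n ≥ 1, the set S_k of density matrices on ℂ^n ⊗ ℂ^n with Schmidt number at most k is a compact subset of the space of complex matrices indexed by Fin n × Fin n. -/
open Matrix BigOperators
open scoped ComplexOrder

/-!
`S_k` is the convex hull of the projectors `|ψ⟩⟨ψ|` onto unit vectors of Schmidt rank at most `k`.
These vectors form a compact set: the unit sphere is compact and `{M | rank M ≤ k}` is closed,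
rank being lower semicontinuous. Its image under `ψ ↦ |ψ⟩⟨ψ|` is compact, and by Carathéodory's
theorem the convex hull of a compact subset of a finite-dimensional space is a finite union of
continuous images of (simplex) × (copies of the set), hence compact.
-/

open Module

theorem Matrix.isClosed_setOf_rank_le {𝕜 : Type*} [NontriviallyNormedField 𝕜] [CompleteSpace 𝕜]
    {m n : Type*} [Fintype m] [Fintype n] [DecidableEq n] (k : ℕ) :
    IsClosed {A : Matrix m n 𝕜 | A.rank ≤ k} := by
  let toCLM : Matrix m n 𝕜 →ₗ[𝕜] (n → 𝕜) →L[𝕜] (m → 𝕜) :=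
    LinearMap.toContinuousLinearMap.toLinearMap ∘ₗ Matrix.toLin'.toLinearMap
  have hrank (A : Matrix m n 𝕜) :
      ((k + 1 : ℕ) : Cardinal) ≤ LinearMap.rank (toCLM A : (n → 𝕜) →ₗ[𝕜] m → 𝕜) ↔
        k + 1 ≤ A.rank := by
    rw [LinearMap.rank, ← finrank_eq_rank, Nat.cast_le]
    rfl
  have hopen := (isOpen_setOfPred_nat_le_rank (k + 1)).preimage toCLM.continuous_of_finiteDimensional
  rw [← isOpen_compl_iff]
  convert hopen using 1
  ext A
  rw [Set.mem_preimage, Set.mem_ofPred_eq, hrank]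
  simp

section ConvexHull

variable {𝕜 V : Type*} [Field 𝕜] [LinearOrder 𝕜] [IsStrictOrderedRing 𝕜]
  [AddCommGroup V] [Module 𝕜 V] [FiniteDimensional 𝕜 V]

theorem convexHull_eq_iUnion_image_stdSimplex (s : Set V) :
    convexHull 𝕜 s = ⋃ m : Fin (finrank 𝕜 V + 2),
      (fun p : (Fin m → 𝕜) × (Fin m → V) => ∑ i, p.1 i • p.2 i) ''
        (stdSimplex 𝕜 (Fin m) ×ˢ Set.univ.pi fun _ => s) := by
  refine subset_antisymm (fun x hx => ?_) (Set.iUnion_subset fun m => ?_)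
  · obtain ⟨ι, _, z, w, hzs, hind, hw₀, hw₁, rfl⟩ := eq_pos_convex_span_of_mem_convexHull hx
    have hcard : Fintype.card ι < finrank 𝕜 V + 2 := by
      have := hind.card_le_finrank_succ
      have := Submodule.finrank_le (vectorSpan 𝕜 (Set.range z))
      omega
    let e := (Fintype.equivFin ι).symm
    refine Set.mem_iUnion.2 ⟨⟨_, hcard⟩, (w ∘ e, z ∘ e), ⟨⟨fun i => (hw₀ _).le, ?_⟩,
      fun i _ => hzs ⟨_, rfl⟩⟩, e.sum_comp fun i => w i • z i⟩
    exact (e.sum_comp w).trans hw₁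
  · rintro _ ⟨⟨w, z⟩, ⟨hw, hz⟩, rfl⟩
    exact mem_convexHull_of_exists_fintype w z hw.1 hw.2 (fun i => hz i trivial) rfl

end ConvexHull

theorem IsCompact.convexHull {V : Type*} [AddCommGroup V] [Module ℝ V] [TopologicalSpace V]
    [ContinuousAdd V] [ContinuousSMul ℝ V] [FiniteDimensional ℝ V] {s : Set V}
    (hs : IsCompact s) : IsCompact (convexHull ℝ s) := by
  rw [convexHull_eq_iUnion_image_stdSimplex]
  exact isCompact_iUnion fun m =>
    ((isCompact_stdSimplex ℝ _).prod (isCompact_univ_pi fun _ => hs)).image (by fun_prop)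
theorem IsUnitVec.norm_le_one {γ : Type*} [Fintype γ] {ψ : γ → ℂ} (hψ : IsUnitVec ψ) :
    ‖ψ‖ ≤ 1 := by
  refine (pi_norm_le_iff_of_nonneg zero_le_one).2 fun x => ?_
  have hx : ‖ψ x‖ ^ 2 ≤ 1 := by
    rw [← Complex.normSq_eq_norm_sq, ← hψ]
    exact Finset.single_le_sum (fun y _ => Complex.normSq_nonneg (ψ y)) (Finset.mem_univ x)
  exact (sq_le_one_iff₀ (norm_nonneg _)).1 hx

theorem isCompact_setOf_isUnitVec {γ : Type*} [Fintype γ] :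
    IsCompact {ψ : γ → ℂ | IsUnitVec ψ} := by
  refine Metric.isCompact_of_isClosed_isBounded (isClosed_eq (by fun_prop) continuous_const) ?_
  refine (Metric.isBounded_closedBall (x := 0) (r := 1)).subset fun ψ hψ => ?_
  simpa using IsUnitVec.norm_le_one hψ

theorem continuous_matOfVec {α β : Type*} : Continuous (matOfVec : (α × β → ℂ) → Matrix α β ℂ) :=
  continuous_matrix fun i j => continuous_apply (i, j)

theorem continuous_outer_s4 {γ : Type*} : Continuous (outer : (γ → ℂ) → Matrix γ γ ℂ) :=
  continuous_matrix fun x y => (continuous_apply x).mul (continuous_apply y).star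

theorem setOf_inSchmidtClass_eq_convexHull {α : Type*} [Fintype α] (k : ℕ) :
    {ρ : Matrix (α × α) (α × α) ℂ | InSchmidtClass k ρ} =
      convexHull ℝ (outer '' {ψ | IsUnitVec ψ ∧ schmidtRank ψ ≤ k}) := by
  ext ρ
  constructor
  · rintro ⟨m, p, ψ, hp₀, hp₁, hψ₁, hψk, rfl⟩
    exact mem_convexHull_of_exists_fintype p (fun i => outer (ψ i)) hp₀ hp₁
      (fun i => ⟨ψ i, ⟨hψ₁ i, hψk i⟩, rfl⟩) (by simp [Complex.coe_smul])
  · intro hρ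
    obtain ⟨ι, _, w, z, hw₀, hw₁, hz, rfl⟩ := mem_convexHull_iff_exists_fintype.1 hρ
    choose ψ hψ hψz using hz
    let e := (Fintype.equivFin ι).symm
    refine ⟨_, w ∘ e, ψ ∘ e, fun i => hw₀ _, (e.sum_comp w).trans hw₁,
      fun i => (hψ _).1, fun i => (hψ _).2, ?_⟩
    simp only [Function.comp_apply, hψz, ← Complex.coe_smul]
    exact (e.sum_comp fun i => (w i : ℂ) • z i).symm

theorem schmidt_class_isCompact_general {n k : ℕ} :
    IsCompact {ρ : Matrix (Fin n × Fin n) (Fin n × Fin n) ℂ | InSchmidtClass k ρ} := by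
  rw [setOf_inSchmidtClass_eq_convexHull]
  have hvectors : IsCompact {ψ : Fin n × Fin n → ℂ | IsUnitVec ψ ∧ schmidtRank ψ ≤ k} :=
    isCompact_setOf_isUnitVec.inter_right
      ((Matrix.isClosed_setOf_rank_le k).preimage continuous_matOfVec)
  exact (hvectors.image continuous_outer_s4).convexHull

/-- For `k ≥ 1`, `n ≥ 1`, the set `S_k` of density matrices on `ℂ^n ⊗ ℂ^n`
with Schmidt number at most `k` is compact. -/
theorem schmidt_class_isCompact {n k : ℕ} (hn : 1 ≤ n) (hk : 1 ≤ k) :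
    IsCompact {ρ : Matrix (Fin n × Fin n) (Fin n × Fin n) ℂ | InSchmidtClass k ρ} :=
  schmidt_class_isCompact_general
end

section
/- Let ρ ∈ S_k be a density matrix on ℂ^N ⊗ ℂ^N with Schmidt number at most k, and let Ψ ∈ ℂ^N ⊗ ℂ^N be a maximally entangled unit vector. Then ⟨Ψ, ρΨ⟩ ≤ k/N (the left-hand side is a nonnegative real number). -/
open Matrix BigOperators
open scoped ComplexOrder

section Aux

noncomputable section

variable {N : ℕ}

def projU (B : Matrix (Fin N) (Fin N) ℂ) :
    EuclideanSpace ℂ (Fin N) →ₗ[ℂ] EuclideanSpace ℂ (Fin N) :=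
  (LinearMap.range (Matrix.toEuclideanLin B) : Submodule ℂ (EuclideanSpace ℂ (Fin N))).subtype ∘ₗ
    (Submodule.orthogonalProjectionOnto (LinearMap.range (Matrix.toEuclideanLin B) : Submodule ℂ (EuclideanSpace ℂ (Fin N)))
      : EuclideanSpace ℂ (Fin N) →ₗ[ℂ] _)

def projMat (B : Matrix (Fin N) (Fin N) ℂ) : Matrix (Fin N) (Fin N) ℂ :=
  Matrix.of fun i j => projU B (EuclideanSpace.single j 1) i

lemma projMat_mulVec (B : Matrix (Fin N) (Fin N) ℂ) (v : Fin N → ℂ) :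
    (projMat B).mulVec v = WithLp.ofLp (projU B (WithLp.toLp 2 v)) := by
  have hv : (WithLp.toLp 2 v : EuclideanSpace ℂ (Fin N)) = ∑ j, v j • EuclideanSpace.single j 1 := by
    ext i
    rw [WithLp.ofLp_sum, Finset.sum_apply]
    simp only [PiLp.smul_apply, EuclideanSpace.single_apply, smul_eq_mul]
    simp [Pi.single_apply, eq_comm]
  funext i
  rw [hv]
  rw [map_sum, WithLp.ofLp_sum, Finset.sum_apply]
  simp [mulVec, dotProduct, projMat, mul_comm]

lemma projU_isProj (B : Matrix (Fin N) (Fin N) ℂ) :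
    LinearMap.IsProj (LinearMap.range (Matrix.toEuclideanLin B) :
      Submodule ℂ (EuclideanSpace ℂ (Fin N))) (projU B) := by
  constructor
  · intro x; exact (Submodule.orthogonalProjectionOnto _ x).2
  · intro x hx
    simp [projU, Submodule.starProjection_eq_self_iff.2 hx]

lemma projMat_mul_self (B : Matrix (Fin N) (Fin N) ℂ) :
    projMat B * projMat B = projMat B := by
  ext i j
  have := congrFun (congrFun (congrArg Matrix.mulVec (rfl : projMat B = projMat B)) 0) i
  have h1 : ((projMat B * projMat B).mulVec (Pi.single j 1)) i
      = ((projMat B).mulVec (Pi.single j 1)) i := by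
    rw [← Matrix.mulVec_mulVec, projMat_mulVec, projMat_mulVec]
    simp only [WithLp.toLp_ofLp]
    exact congrFun (congrArg WithLp.ofLp ((projU_isProj B).2 _ ((projU_isProj B).1 _))) i
  simpa [Matrix.mulVec_single] using h1

lemma projMat_mul_B (B : Matrix (Fin N) (Fin N) ℂ) :
    projMat B * B = B := by
  ext i j
  have h1 : ((projMat B * B).mulVec (Pi.single j 1)) i = (B.mulVec (Pi.single j 1)) i := by
    rw [← Matrix.mulVec_mulVec, projMat_mulVec]
    exact congrFun (congrArg WithLp.ofLp ((projU_isProj B).2 _ ⟨WithLp.toLp 2 (Pi.single j 1), rfl⟩)) i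
  simpa [Matrix.mulVec_single] using h1

lemma projMat_conjTranspose (B : Matrix (Fin N) (Fin N) ℂ) :
    (projMat B)ᴴ = projMat B := by
  ext i j
  have key : ∀ (u v : EuclideanSpace ℂ (Fin N)),
      (inner ℂ (projU B u) v : ℂ) = inner ℂ u (projU B v) := by
    intro u v
    simpa [projU] using
      Submodule.inner_starProjection_left_eq_right
        (LinearMap.range (Matrix.toEuclideanLin B) : Submodule ℂ (EuclideanSpace ℂ (Fin N))) u v
  have h := key (EuclideanSpace.single j 1) (EuclideanSpace.single i 1)
  simp only [EuclideanSpace.inner_single_right, EuclideanSpace.inner_single_left] at h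
  simp only [conjTranspose_apply, projMat, Matrix.of_apply]
  simp only [_root_.map_one, one_mul] at h
  rw [← h, starRingEnd_apply, star_star]

lemma projMat_trace (B : Matrix (Fin N) (Fin N) ℂ) :
    (projMat B).trace = (B.rank : ℂ) := by
  have hfr : B.rank = Module.finrank ℂ
      (LinearMap.range (Matrix.toEuclideanLin B) : Submodule ℂ (EuclideanSpace ℂ (Fin N))) :=
    Matrix.rank_eq_finrank_range_toLin B (PiLp.basisFun 2 ℂ (Fin N)) (PiLp.basisFun 2 ℂ (Fin N))
  have htr := (projU_isProj B).trace
  have hb : LinearMap.toMatrix (PiLp.basisFun 2 ℂ (Fin N)) (PiLp.basisFun 2 ℂ (Fin N))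
      (projU B) = projMat B := by
    ext i j
    rw [LinearMap.toMatrix_apply, PiLp.basisFun_repr, PiLp.basisFun_apply]
    rfl
  rw [hfr, ← htr, LinearMap.trace_eq_matrix_trace ℂ (PiLp.basisFun 2 ℂ (Fin N)), hb]

end

lemma key_bound {N k : ℕ} (ψ Ψ : Fin N × Fin N → ℂ) (hψ : IsUnitVec ψ)
    (hr : schmidtRank ψ ≤ k)
    (hΨme : matOfVec Ψ * (matOfVec Ψ)ᴴ = ((N : ℂ)⁻¹) • (1 : Matrix (Fin N) (Fin N) ℂ)) :
    Complex.normSq (∑ x, star (Ψ x) * ψ x) ≤ (k : ℝ) / N := by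
  have hN : 0 < N := by
    rcases Nat.eq_zero_or_pos N with h | h
    · subst h; simp [IsUnitVec, Finset.sum_eq_zero] at hψ
    · exact h
  set A := matOfVec Ψ with hA
  set B := matOfVec ψ with hB
  set P := projMat B with hP
  set X := P * A with hX
  -- step 2 : Xᴴ * B = Aᴴ * B
  have hXB : Xᴴ * B = Aᴴ * B := by
    rw [hX, conjTranspose_mul, Matrix.mul_assoc, projMat_conjTranspose, projMat_mul_B]
  -- step 1 : the overlap as a trace
  have htr : ∀ (Y : Matrix (Fin N) (Fin N) ℂ) (Z : Matrix (Fin N) (Fin N) ℂ),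
      (Yᴴ * Z).trace = ∑ x : Fin N × Fin N, star (Y x.1 x.2) * Z x.1 x.2 := by
    intro Y Z
    rw [Matrix.trace, Fintype.sum_prod_type]
    simp only [diag_apply, Matrix.mul_apply, conjTranspose_apply]
    exact Finset.sum_comm
  have hc : (∑ x, star (Ψ x) * ψ x) = ∑ x : Fin N × Fin N, star (X x.1 x.2) * B x.1 x.2 := by
    rw [← htr, hXB, htr]
    simp [hA, hB, matOfVec]
  -- step 5 : Frobenius norm of X
  have hXfro : (∑ x : Fin N × Fin N, Complex.normSq (X x.1 x.2)) = (B.rank : ℝ) / N := by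
    have h1 : ((∑ x : Fin N × Fin N, Complex.normSq (X x.1 x.2) : ℝ) : ℂ)
        = (Xᴴ * X).trace := by
      rw [htr]
      push_cast
      refine Finset.sum_congr rfl fun x _ => ?_
      rw [Complex.normSq_eq_conj_mul_self]
      rfl
    have h2 : Xᴴ * X = Aᴴ * (P * A) := by
      rw [hX, conjTranspose_mul, projMat_conjTranspose, Matrix.mul_assoc, ← Matrix.mul_assoc P,
        projMat_mul_self]
    have h3 : (Xᴴ * X).trace = ((B.rank : ℝ) / N : ℝ) := by
      rw [h2, ← Matrix.mul_assoc, Matrix.trace_mul_comm, ← Matrix.mul_assoc, Matrix.trace_mul_comm,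
        hΨme, Matrix.mul_smul, Matrix.mul_one, Matrix.trace_smul, projMat_trace, smul_eq_mul]
      push_cast
      ring
    exact_mod_cast h1.trans h3
  have hBfro : (∑ x : Fin N × Fin N, Complex.normSq (B x.1 x.2)) = 1 := by
    simpa [hB, matOfVec, IsUnitVec] using hψ
  -- step 3 : Cauchy-Schwarz
  rw [hc]
  have habs : ‖(∑ x : Fin N × Fin N, star (X x.1 x.2) * B x.1 x.2)‖
      ≤ ∑ x : Fin N × Fin N, ‖(X x.1 x.2)‖ * ‖(B x.1 x.2)‖ := by
    have h0 : ‖(∑ x : Fin N × Fin N, star (X x.1 x.2) * B x.1 x.2)‖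
        ≤ ∑ x : Fin N × Fin N, ‖(star (X x.1 x.2) * B x.1 x.2)‖ := by
      simpa using
        norm_sum_le (Finset.univ : Finset (Fin N × Fin N))
          (fun x => star (X x.1 x.2) * B x.1 x.2)
    refine h0.trans (le_of_eq ?_)
    refine Finset.sum_congr rfl fun x _ => ?_
    rw [norm_mul, Complex.star_def, Complex.norm_conj]
  have hcs := Finset.sum_mul_sq_le_sq_mul_sq Finset.univ
    (fun x : Fin N × Fin N => ‖(X x.1 x.2)‖)
    (fun x : Fin N × Fin N => ‖(B x.1 x.2)‖)
  calc Complex.normSq (∑ x : Fin N × Fin N, star (X x.1 x.2) * B x.1 x.2)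
      = ‖(∑ x : Fin N × Fin N, star (X x.1 x.2) * B x.1 x.2)‖ ^ 2 := by
        rw [Complex.sq_norm]
    _ ≤ (∑ x : Fin N × Fin N, ‖(X x.1 x.2)‖ * ‖(B x.1 x.2)‖) ^ 2 := by
        apply pow_le_pow_left₀ (norm_nonneg _) habs
    _ ≤ (∑ x : Fin N × Fin N, ‖(X x.1 x.2)‖ ^ 2)
        * (∑ x : Fin N × Fin N, ‖(B x.1 x.2)‖ ^ 2) := hcs
    _ = (B.rank : ℝ) / N * 1 := by
        simp only [Complex.sq_norm]
        rw [hXfro, hBfro]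
    _ ≤ (k : ℝ) / N := by
        rw [mul_one]
        have hrk : (B.rank : ℝ) ≤ (k : ℝ) := by exact_mod_cast hr
        gcongr


end Aux

/-- If `ρ ∈ S_k` is a density matrix on `ℂ^N ⊗ ℂ^N` and `Ψ` is a maximally
entangled unit vector, then `⟨Ψ, ρΨ⟩ ≤ k/N`. -/
theorem maxEnt_overlap_le_of_schmidt_class {N k : ℕ} (hk : 1 ≤ k)
    (ρ : Matrix (Fin N × Fin N) (Fin N × Fin N) ℂ)
    (hρ : ρ.PosSemidef) (hτ : ρ.trace = 1)
    (hS : InSchmidtClass k ρ)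
    (Ψ : Fin N × Fin N → ℂ) (hΨu : IsUnitVec Ψ)
    (hΨme : matOfVec Ψ * (matOfVec Ψ)ᴴ = ((N : ℂ)⁻¹) • (1 : Matrix (Fin N) (Fin N) ℂ)) :
    (star Ψ ⬝ᵥ ρ.mulVec Ψ).im = 0 ∧ (star Ψ ⬝ᵥ ρ.mulVec Ψ).re ≤ (k : ℝ) / N := by
  obtain ⟨m, p, ψ, hp0, hp1, hunit, hrank, hdec⟩ := hS
  have houter : ∀ φ : Fin N × Fin N → ℂ,
      star Ψ ⬝ᵥ (outer φ).mulVec Ψ = ((Complex.normSq (∑ x, star (Ψ x) * φ x) : ℝ) : ℂ) := by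
    intro φ
    have h1 : star Ψ ⬝ᵥ (outer φ).mulVec Ψ
        = ∑ x, ∑ y, (star (Ψ x) * φ x) * (star (φ y) * Ψ y) := by
      simp only [dotProduct, mulVec, outer, Matrix.of_apply, Pi.star_apply, Finset.mul_sum]
      exact Finset.sum_congr rfl fun x _ => Finset.sum_congr rfl fun y _ => by ring
    have h2 : (∑ y, star (φ y) * Ψ y) = star (∑ x, star (Ψ x) * φ x) := by
      rw [star_sum]
      exact Finset.sum_congr rfl fun y _ => by
        rw [StarMul.star_mul, star_star]
    rw [h1, ← Finset.sum_mul_sum, h2, Complex.star_def, Complex.mul_conj]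
  have hq : star Ψ ⬝ᵥ ρ.mulVec Ψ
      = ((∑ i, p i * Complex.normSq (∑ x, star (Ψ x) * ψ i x) : ℝ) : ℂ) := by
    have hsum : (∑ i, (p i : ℂ) • outer (ψ i)) *ᵥ Ψ
        = ∑ i, ((p i : ℂ) • outer (ψ i)) *ᵥ Ψ := by
      funext x
      simp only [mulVec, dotProduct, Finset.sum_apply, Matrix.sum_apply, Finset.sum_mul]
      exact Finset.sum_comm
    have hds : star Ψ ⬝ᵥ (∑ i, ((p i : ℂ) • outer (ψ i)) *ᵥ Ψ)
        = ∑ i, star Ψ ⬝ᵥ (((p i : ℂ) • outer (ψ i)) *ᵥ Ψ) := by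
      simp only [dotProduct, Finset.sum_apply, Finset.mul_sum]
      exact Finset.sum_comm
    rw [hdec, hsum, hds]
    push_cast
    refine Finset.sum_congr rfl fun i _ => ?_
    rw [Matrix.smul_mulVec, dotProduct_smul, houter (ψ i)]
    simp [smul_eq_mul]
  rw [hq]
  constructor
  · exact Complex.ofReal_im _
  · rw [Complex.ofReal_re]
    calc (∑ i, p i * Complex.normSq (∑ x, star (Ψ x) * ψ i x))
        ≤ ∑ i, p i * ((k : ℝ) / N) := by
          refine Finset.sum_le_sum fun i _ => ?_
          exact mul_le_mul_of_nonneg_left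
            (key_bound (ψ i) Ψ (hunit i) (hrank i) hΨme) (hp0 i)
      _ = (k : ℝ) / N := by rw [← Finset.sum_mul, hp1, one_mul]
end

section
/- Let N ≥ 1, let 1 ≤ k ≤ N, and let p be a real number with 0 ≤ p ≤ 1/k. Then the linear map Λ_p : M_N(ℂ) → M_N(ℂ) defined by Λ_p(X) = Tr(X)·I − p·X is k-positive. -/
open Matrix BigOperators
open scoped ComplexOrder

/-!
For `v ∈ ℂ^N ⊗ ℂ^N` put `W = M_vᴴ M_ψ`. A direct computation gives
`⟨v, (1 ⊗ Λ_p)(|ψ⟩⟨ψ|) v⟩ = ‖W‖₂² - p |tr W|²` (Frobenius norm), and `rank W ≤ rank M_ψ ≤ k`.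
If `P` is the orthogonal projection onto the range of `W`, then `tr W = tr (P W)`, so by
Cauchy–Schwarz `|tr W|² ≤ ‖P‖₂² ‖W‖₂² = rank W · ‖W‖₂² ≤ k ‖W‖₂²`, and `p k ≤ 1` finishes.
-/

open scoped Kronecker

namespace Matrix

variable {m n : Type*} [Fintype m] [Fintype n]

lemma trace_mul_conjTranspose_self_eq_sum_norm_sq (A : Matrix m n ℂ) :
    (A * Aᴴ).trace = ((∑ i, ∑ j, ‖A i j‖ ^ 2 : ℝ) : ℂ) := by
  simp [trace, mul_apply, Complex.mul_conj']

lemma norm_trace_mul_sq_le (A : Matrix m n ℂ) (B : Matrix n m ℂ) :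
    ‖(A * B).trace‖ ^ 2 ≤ (∑ i, ∑ j, ‖A i j‖ ^ 2) * ∑ j, ∑ i, ‖B j i‖ ^ 2 := by
  have htrace : (A * B).trace = ∑ x : m × n, A x.1 x.2 * B x.2 x.1 := by
    simp [trace, mul_apply, Fintype.sum_prod_type]
  calc ‖(A * B).trace‖ ^ 2 ≤ (∑ x : m × n, ‖A x.1 x.2‖ * ‖B x.2 x.1‖) ^ 2 := by
        rw [htrace]
        gcongr
        exact (norm_sum_le _ _).trans_eq (by simp)
    _ ≤ (∑ x : m × n, ‖A x.1 x.2‖ ^ 2) * ∑ x : m × n, ‖B x.2 x.1‖ ^ 2 :=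
        Finset.sum_mul_sq_le_sq_mul_sq _ _ _
    _ = _ := by rw [Fintype.sum_prod_type, Fintype.sum_prod_type, Finset.sum_comm (γ := n)]

lemma exists_mul_eq_self_sum_norm_sq_eq_rank [DecidableEq m] (W : Matrix m n ℂ) :
    ∃ P : Matrix m m ℂ, P * W = W ∧ ∑ i, ∑ j, ‖P i j‖ ^ 2 = W.rank := by
  have hH := isHermitian_mul_conjTranspose_self W
  set U : Matrix m m ℂ := (hH.eigenvectorUnitary : Matrix m m ℂ)
  have hdiag : Uᴴ * (W * Wᴴ) * U = diagonal (RCLike.ofReal ∘ hH.eigenvalues) := by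
    simpa [U, star_eq_conjTranspose] using hH.conjStarAlgAut_star_eigenvectorUnitary
  have hUU : Uᴴ * U = 1 := by simp [U, ← star_eq_conjTranspose]
  have hUU' : U * Uᴴ = 1 := by simp [U, ← star_eq_conjTranspose]
  -- `U Q Uᴴ` projects onto the eigenvectors of `W Wᴴ` with nonzero eigenvalue: the range of `W`.
  set Q : Matrix m m ℂ := diagonal fun a => if hH.eigenvalues a = 0 then 0 else 1
  have hQ : Q * Q = Q := by simp [Q, diagonal_mul_diagonal]
  have hQH : Qᴴ = Q := by simp [Q, diagonal_conjTranspose]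
  -- The Gram matrix of `(1 - Q) Uᴴ W` is `(1 - Q) D (1 - Q) = 0`, `D` the eigenvalues of `W Wᴴ`.
  have hker : (1 - Q) * Uᴴ * W = 0 := by
    have hQD : (1 - Q) * diagonal (RCLike.ofReal ∘ hH.eigenvalues) = 0 := by
      ext a b
      by_cases h : hH.eigenvalues b = 0
      · simp [mul_diagonal, h]
      · obtain rfl | hab := eq_or_ne a b <;> simp [Q, mul_diagonal, *]
    refine trace_mul_conjTranspose_self_eq_zero_iff (A := (1 - Q) * Uᴴ * W) |>.mp ?_
    calc (((1 - Q) * Uᴴ * W * ((1 - Q) * Uᴴ * W)ᴴ).trace : ℂ)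
        = ((1 - Q) * (Uᴴ * (W * Wᴴ) * U) * (1 - Q)ᴴ).trace := by
          simp only [conjTranspose_mul, conjTranspose_conjTranspose, Matrix.mul_assoc]
      _ = 0 := by rw [hdiag, hQD, Matrix.zero_mul, trace_zero]
  refine ⟨U * Q * Uᴴ, ?_, ?_⟩
  · calc U * Q * Uᴴ * W = W - U * ((1 - Q) * Uᴴ * W) := by
          simp only [Matrix.sub_mul, Matrix.mul_sub, ← Matrix.mul_assoc, hUU', Matrix.one_mul]
          abel
      _ = W := by rw [hker, Matrix.mul_zero, sub_zero]
  · apply Complex.ofReal_injective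
    rw [← trace_mul_conjTranspose_self_eq_sum_norm_sq]
    calc (U * Q * Uᴴ * (U * Q * Uᴴ)ᴴ).trace = Q.trace := by
          simp only [conjTranspose_mul, conjTranspose_conjTranspose, hQH, Matrix.mul_assoc]
          rw [← Matrix.mul_assoc Uᴴ U, hUU, Matrix.one_mul, ← Matrix.mul_assoc Q Q, hQ,
            trace_mul_comm, Matrix.mul_assoc, hUU, Matrix.mul_one]
      _ = W.rank := by
          rw [← rank_self_mul_conjTranspose, hH.rank_eq_card_non_zero_eigs, trace_diagonal,
            Fintype.card_subtype]
          simp [Finset.sum_ite]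

lemma norm_trace_sq_le_rank_mul [DecidableEq n] (W : Matrix n n ℂ) :
    ‖W.trace‖ ^ 2 ≤ W.rank * ∑ i, ∑ j, ‖W i j‖ ^ 2 := by
  obtain ⟨P, hPW, hP⟩ := exists_mul_eq_self_sum_norm_sq_eq_rank W
  calc ‖W.trace‖ ^ 2 = ‖(P * W).trace‖ ^ 2 := by rw [hPW]
    _ ≤ W.rank * ∑ i, ∑ j, ‖W i j‖ ^ 2 := hP ▸ norm_trace_mul_sq_le P W

end Matrix

/-- The map `Λ_p`; for `p = 1` it is the reduction map. -/
def reductionMap {n : ℕ} (p : ℝ) (X : Matrix (Fin n) (Fin n) ℂ) : Matrix (Fin n) (Fin n) ℂ :=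
  X.trace • 1 - (p : ℂ) • X

lemma blockMap_reductionMap_outer {γ : Type*} {n : ℕ} (p : ℝ) (ψ : γ × Fin n → ℂ) :
    blockMap (reductionMap p) (outer ψ) =
      (matOfVec ψ * (matOfVec ψ)ᴴ) ⊗ₖ 1 - (p : ℂ) • outer ψ := by
  ext ⟨i, s⟩ ⟨j, t⟩
  simp [reductionMap, blockMap, outer, matOfVec, trace, mul_apply, kroneckerMap_apply, one_apply]

section Bipartite

variable {α β : Type*} [Fintype α] [Fintype β]

lemma star_dotProduct_eq_trace_matOfVec (v ψ : α × β → ℂ) :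
    star v ⬝ᵥ ψ = ((matOfVec v)ᴴ * matOfVec ψ).trace := by
  simp [dotProduct, trace, mul_apply, matOfVec, Fintype.sum_prod_type, Finset.sum_comm (γ := β)]

lemma dotProduct_outer_mulVec {γ : Type*} [Fintype γ] (ψ v : γ → ℂ) :
    star v ⬝ᵥ (outer ψ *ᵥ v) = (star v ⬝ᵥ ψ) * star (star v ⬝ᵥ ψ) := by
  rw [show outer ψ = vecMulVec ψ (star ψ) from rfl, vecMulVec_mulVec, dotProduct_smul,
    op_smul_eq_mul, star_dotProduct ψ v]

lemma dotProduct_kronecker_one_mulVec [DecidableEq β] (C : Matrix α α ℂ) (v : α × β → ℂ) :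
    star v ⬝ᵥ ((C ⊗ₖ (1 : Matrix β β ℂ)) *ᵥ v) = ((matOfVec v)ᴴ * C * matOfVec v).trace := by
  simp only [dotProduct, Pi.star_apply, RCLike.star_def, mulVec, kroneckerMap_apply, one_apply,
    mul_ite, mul_one, mul_zero, ite_mul, zero_mul, Fintype.sum_prod_type, Finset.sum_ite_eq,
    Finset.mem_univ, ↓reduceIte, Finset.mul_sum, trace, matOfVec, diag_apply, mul_apply,
    conjTranspose_apply, of_apply, Finset.sum_mul, mul_assoc]
  rw [Finset.sum_comm]
  exact Finset.sum_congr rfl fun _ _ => Finset.sum_comm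

variable {n : ℕ}

lemma isHermitian_blockMap_reductionMap_outer (p : ℝ) (ψ : α × Fin n → ℂ) :
    (blockMap (reductionMap p) (outer ψ)).IsHermitian := by
  rw [blockMap_reductionMap_outer]
  exact ((posSemidef_self_mul_conjTranspose _).kronecker .one).isHermitian.sub
    ((posSemidef_vecMulVec_self_star ψ).isHermitian.smul (Complex.conj_ofReal p))

lemma dotProduct_blockMap_reductionMap_outer_mulVec (p : ℝ) (ψ v : α × Fin n → ℂ) :
    star v ⬝ᵥ (blockMap (reductionMap p) (outer ψ) *ᵥ v) =
      ((∑ i, ∑ j, ‖((matOfVec v)ᴴ * matOfVec ψ) i j‖ ^ 2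
        - p * ‖((matOfVec v)ᴴ * matOfVec ψ).trace‖ ^ 2 : ℝ) : ℂ) := by
  rw [blockMap_reductionMap_outer, sub_mulVec, dotProduct_sub, smul_mulVec, dotProduct_smul,
    dotProduct_kronecker_one_mulVec, dotProduct_outer_mulVec, star_dotProduct_eq_trace_matOfVec,
    Complex.ofReal_sub, ← trace_mul_conjTranspose_self_eq_sum_norm_sq ((matOfVec v)ᴴ * matOfVec ψ)]
  simp [Matrix.mul_assoc, Complex.mul_conj']

end Bipartite

theorem lambda_p_kPositive_general {N k : ℕ}
    (p : ℝ) (hp0 : 0 ≤ p) (hp : p ≤ 1 / (k : ℝ)) :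
    kPositive k (fun X : Matrix (Fin N) (Fin N) ℂ =>
      X.trace • (1 : Matrix (Fin N) (Fin N) ℂ) - (p : ℂ) • X) := by
  show kPositive k (reductionMap p)
  intro ψ _ hψ
  refine .of_dotProduct_mulVec_nonneg (isHermitian_blockMap_reductionMap_outer p ψ) fun v => ?_
  rw [dotProduct_blockMap_reductionMap_outer_mulVec, Complex.zero_le_real, sub_nonneg]
  set W := (matOfVec v)ᴴ * matOfVec ψ
  have hW : ‖W.trace‖ ^ 2 ≤ k * ∑ i, ∑ j, ‖W i j‖ ^ 2 :=
    W.norm_trace_sq_le_rank_mul.trans (by gcongr; exact (rank_mul_le_right _ _).trans hψ)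
  have hpk : p * k ≤ 1 :=
    (mul_le_mul_of_nonneg_right hp k.cast_nonneg).trans (by rw [one_div]; exact inv_mul_le_one)
  calc p * ‖W.trace‖ ^ 2 ≤ p * (k * ∑ i, ∑ j, ‖W i j‖ ^ 2) := by gcongr
    _ = p * k * ∑ i, ∑ j, ‖W i j‖ ^ 2 := by ring
    _ ≤ ∑ i, ∑ j, ‖W i j‖ ^ 2 := mul_le_of_le_one_left (by positivity) hpk

/-- For `1 ≤ k ≤ N` and `0 ≤ p ≤ 1/k`, the map
`Λ_p(X) = Tr(X)·I − p·X` on `M_N(ℂ)` is `k`-positive. -/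
theorem lambda_p_kPositive {N k : ℕ} (hN : 1 ≤ N) (hk : 1 ≤ k) (hkN : k ≤ N)
    (p : ℝ) (hp0 : 0 ≤ p) (hp : p ≤ 1 / (k : ℝ)) :
    kPositive k (fun X : Matrix (Fin N) (Fin N) ℂ =>
      X.trace • (1 : Matrix (Fin N) (Fin N) ℂ) - (p : ℂ) • X) :=
  lambda_p_kPositive_general p hp0 hp
end

section
/- Let N ≥ 1, let k be such that k + 1 ≤ N, and let p be a real number with p > 1/(k+1). Then the linear map Λ_p : M_N(ℂ) → M_N(ℂ) defined by Λ_p(X) = Tr(X)·I − p·X is not (k+1)-positive; that is, there exists a unit vector ψ ∈ ℂ^N ⊗ ℂ^N of Schmidt rank at most k+1 such that (1 ⊗ Λ_p)(|ψ⟩⟨ψ|) is not positive semidefinite. -/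
open Matrix BigOperators
open scoped ComplexOrder

/-!
Let `ψ` be the maximally entangled vector on the first `k + 1` basis states, so that
`M_ψ = P / √(k + 1)` with `P` a rank-`(k + 1)` coordinate projection. Blockwise,
`(1 ⊗ Λ_p)(|ψ⟩⟨ψ|) = M_ψ M_ψᴴ ⊗ 1 - p |ψ⟩⟨ψ|`, and `M_ψ M_ψᴴ M_ψ = M_ψ / (k + 1)`, so `ψ` is an
eigenvector of `(1 ⊗ Λ_p)(|ψ⟩⟨ψ|)` with the negative eigenvalue `1 / (k + 1) - p`.
-/

open scoped Kronecker

noncomputable def lambdaP {n : ℕ} (p : ℂ) (X : Matrix (Fin n) (Fin n) ℂ) :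
    Matrix (Fin n) (Fin n) ℂ :=
  X.trace • 1 - p • X

section LambdaP

variable {γ : Type*} {n : ℕ}

lemma blockMap_lambdaP_outer (p : ℂ) (ψ : γ × Fin n → ℂ) :
    blockMap (lambdaP p) (outer ψ)
      = (matOfVec ψ * (matOfVec ψ)ᴴ) ⊗ₖ (1 : Matrix (Fin n) (Fin n) ℂ) - p • outer ψ := by
  ext a b
  simp [lambdaP, blockMap, outer, matOfVec, Matrix.trace, Matrix.mul_apply, Matrix.one_apply]

lemma kronecker_one_mulVec [Fintype γ] (A : Matrix γ γ ℂ) (ψ : γ × Fin n → ℂ) :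
    (A ⊗ₖ (1 : Matrix (Fin n) (Fin n) ℂ)) *ᵥ ψ = fun x => (A * matOfVec ψ) x.1 x.2 := by
  ext ⟨i, u⟩
  simp [Matrix.mulVec, dotProduct, Fintype.sum_prod_type, Matrix.one_apply, Matrix.mul_apply,
    matOfVec]

lemma outer_mulVec {δ : Type*} [Fintype δ] (ψ v : δ → ℂ) : outer ψ *ᵥ v = (star ψ ⬝ᵥ v) • ψ := by
  ext x
  simp [outer, Matrix.mulVec, dotProduct, Finset.mul_sum, mul_comm, mul_left_comm]

lemma blockMap_lambdaP_outer_mulVec_self [Fintype γ] (p : ℂ) {ψ : γ × Fin n → ℂ} {μ : ℂ}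
    (h : matOfVec ψ * (matOfVec ψ)ᴴ * matOfVec ψ = μ • matOfVec ψ) :
    blockMap (lambdaP p) (outer ψ) *ᵥ ψ = (μ - p * (star ψ ⬝ᵥ ψ)) • ψ := by
  rw [blockMap_lambdaP_outer, Matrix.sub_mulVec, kronecker_one_mulVec, h, Matrix.smul_mulVec,
    outer_mulVec]
  ext x
  simp [matOfVec, sub_mul, mul_assoc]

end LambdaP

lemma IsUnitVec.star_dotProduct_self {δ : Type*} [Fintype δ] {ψ : δ → ℂ} (h : IsUnitVec ψ) :
    star ψ ⬝ᵥ ψ = 1 := by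
  simp only [dotProduct, Pi.star_apply, Complex.star_def, ← Complex.normSq_eq_conj_mul_self]
  exact_mod_cast h

lemma IsUnitVec.ne_zero {δ : Type*} [Fintype δ] {ψ : δ → ℂ} (h : IsUnitVec ψ) : ψ ≠ 0 := by
  rintro rfl
  simpa using h.star_dotProduct_self

lemma Matrix.not_posSemidef_of_mulVec_eq_smul {δ : Type*} [Fintype δ] {A : Matrix δ δ ℂ}
    {v : δ → ℂ} {μ : ℝ} (h : A *ᵥ v = (μ : ℂ) • v) (hv : v ≠ 0) (hμ : μ < 0) :
    ¬ A.PosSemidef := by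
  intro hA
  have hnonneg := hA.dotProduct_mulVec_nonneg v
  rw [h, dotProduct_smul, smul_eq_mul] at hnonneg
  exact (mul_neg_of_neg_of_pos (by exact_mod_cast hμ : (μ : ℂ) < 0)
    (dotProduct_star_self_pos_iff.mpr hv)).not_ge hnonneg

noncomputable def maxEntangledCoeffs (N r : ℕ) : Fin N → ℂ :=
  fun i => if (i : ℕ) < r then ((√(r : ℝ))⁻¹ : ℝ) else 0

noncomputable def maxEntangled (N r : ℕ) : Fin N × Fin N → ℂ :=
  fun x => diagonal (maxEntangledCoeffs N r) x.1 x.2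

section MaxEntangled

variable {N r : ℕ}

lemma matOfVec_maxEntangled : matOfVec (maxEntangled N r) = diagonal (maxEntangledCoeffs N r) :=
  rfl

lemma normSq_maxEntangledCoeffs (i : Fin N) :
    Complex.normSq (maxEntangledCoeffs N r i) = if (i : ℕ) < r then (r : ℝ)⁻¹ else 0 := by
  unfold maxEntangledCoeffs
  split_ifs
  · rw [Complex.normSq_ofReal, ← mul_inv, Real.mul_self_sqrt r.cast_nonneg]
  · simp

lemma isUnitVec_maxEntangled (hr : 0 < r) (hrN : r ≤ N) : IsUnitVec (maxEntangled N r) := by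
  unfold IsUnitVec maxEntangled
  simp only [Fintype.sum_prod_type, diagonal_apply, apply_ite Complex.normSq, map_zero,
    Finset.sum_ite_eq, Finset.mem_univ, if_true, normSq_maxEntangledCoeffs]
  rw [Finset.sum_ite, Finset.sum_const_zero, add_zero, Finset.sum_const, nsmul_eq_mul,
    Fin.card_filter_val_lt, min_eq_right hrN]
  field_simp

lemma schmidtRank_maxEntangled_le : schmidtRank (maxEntangled N r) ≤ r := by
  rw [schmidtRank, matOfVec_maxEntangled, rank_diagonal, Fintype.card_subtype]
  calc (Finset.univ.filter fun i : Fin N => maxEntangledCoeffs N r i ≠ 0).card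
        ≤ (Finset.univ.filter fun i : Fin N => (i : ℕ) < r).card :=
        Finset.card_le_card fun i => by simp +contextual [maxEntangledCoeffs]
    _ = min N r := Fin.card_filter_val_lt
    _ ≤ r := min_le_right _ _

lemma matOfVec_maxEntangled_mul_conjTranspose_mul :
    matOfVec (maxEntangled N r) * (matOfVec (maxEntangled N r))ᴴ * matOfVec (maxEntangled N r)
      = (r : ℂ)⁻¹ • matOfVec (maxEntangled N r) := by
  rw [matOfVec_maxEntangled, diagonal_conjTranspose, diagonal_mul_diagonal, diagonal_mul_diagonal,
    ← diagonal_smul]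
  congr 1
  ext i
  rw [Pi.star_apply, Complex.star_def, Complex.mul_conj, normSq_maxEntangledCoeffs,
    Pi.smul_apply, smul_eq_mul]
  split_ifs with hi
  · rw [Complex.ofReal_inv, Complex.ofReal_natCast]
  · simp [maxEntangledCoeffs, hi]

end MaxEntangled

theorem lambda_p_not_succ_kPositive_general {N k : ℕ} (hkN : k + 1 ≤ N)
    (p : ℝ) (hp : 1 / ((k : ℝ) + 1) < p) :
    ∃ ψ : Fin N × Fin N → ℂ, IsUnitVec ψ ∧ schmidtRank ψ ≤ k + 1 ∧
      ¬ (blockMap (fun X : Matrix (Fin N) (Fin N) ℂ =>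
          X.trace • (1 : Matrix (Fin N) (Fin N) ℂ) - (p : ℂ) • X) (outer ψ)).PosSemidef := by
  set ψ := maxEntangled N (k + 1)
  have hψ : IsUnitVec ψ := isUnitVec_maxEntangled k.succ_pos hkN
  have hEigen :
      blockMap (lambdaP (p : ℂ)) (outer ψ) *ᵥ ψ = ((1 / ((k : ℝ) + 1) - p : ℝ) : ℂ) • ψ := by
    rw [blockMap_lambdaP_outer_mulVec_self _ matOfVec_maxEntangled_mul_conjTranspose_mul,
      hψ.star_dotProduct_self]
    congr 1
    push_cast
    ring
  exact ⟨ψ, hψ, schmidtRank_maxEntangled_le,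
    Matrix.not_posSemidef_of_mulVec_eq_smul hEigen hψ.ne_zero (by linarith)⟩

/-- For `k + 1 ≤ N` and `p > 1/(k+1)`, the map `Λ_p(X) = Tr(X)·I − p·X` on
`M_N(ℂ)` is not `(k+1)`-positive: some unit vector `ψ` of Schmidt rank at most `k+1` has
`(1 ⊗ Λ_p)(|ψ⟩⟨ψ|)` not positive semidefinite. -/
theorem lambda_p_not_succ_kPositive {N k : ℕ} (hN : 1 ≤ N) (hkN : k + 1 ≤ N)
    (p : ℝ) (hp : 1 / ((k : ℝ) + 1) < p) :
    ∃ ψ : Fin N × Fin N → ℂ, IsUnitVec ψ ∧ schmidtRank ψ ≤ k + 1 ∧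
      ¬ (blockMap (fun X : Matrix (Fin N) (Fin N) ℂ =>
          X.trace • (1 : Matrix (Fin N) (Fin N) ℂ) - (p : ℂ) • X) (outer ψ)).PosSemidef :=
  lambda_p_not_succ_kPositive_general hkN p hp
end

section
/- A linear Hermiticity-preserving map Λ : M_N(ℂ) → M_N(ℂ) is k-positive if and only if for all orthonormal families {a_1,…,a_k} and {b_1,…,b_k} in ℂ^N and all nonnegative reals μ_1,…,μ_k with Σ_{n=1}^k μ_n = 1, one has Σ_{n,m=1}^k √(μ_n μ_m) · ⟨b_n, Λ(a_n a_m†) b_m⟩ ≥ 0 (this sum is a real number, and a_n a_m† denotes the N×N matrix |a_n⟩⟨a_m|). -/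
open Matrix BigOperators
open scoped ComplexOrder

/-- `v` is an orthonormal family. -/
def OrthonormalFam {N k : ℕ} (v : Fin k → Fin N → ℂ) : Prop :=
  ∀ i j, star (v i) ⬝ᵥ v j = if i = j then (1 : ℂ) else 0

namespace UhlmannAux

open ComplexConjugate

variable {N k : ℕ}

/-- The scalar sesquilinear form `⟨u, Λ(A B†) w⟩`. -/
noncomputable def sesq (Λ : Matrix (Fin N) (Fin N) ℂ →ₗ[ℂ] Matrix (Fin N) (Fin N) ℂ)
    (A B u w : Fin N → ℂ) : ℂ :=
  star u ⬝ᵥ (Λ (Matrix.vecMulVec A (star B))).mulVec w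

/-- dot with matrix, as a linear map in the matrix argument. -/
noncomputable def dotMapL (u w : Fin N → ℂ) : Matrix (Fin N) (Fin N) ℂ →ₗ[ℂ] ℂ where
  toFun M := star u ⬝ᵥ M.mulVec w
  map_add' A B := by simp [Matrix.add_mulVec, dotProduct_add]
  map_smul' c A := by simp [Matrix.smul_mulVec, dotProduct_smul]

lemma sesq_eq (Λ : Matrix (Fin N) (Fin N) ℂ →ₗ[ℂ] Matrix (Fin N) (Fin N) ℂ)
    (A B u w : Fin N → ℂ) : sesq Λ A B u w = dotMapL u w (Λ (Matrix.vecMulVec A (star B))) := rfl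

lemma vecMulVec_sum_sum (A B : Fin k → Fin N → ℂ) (c e : Fin k → ℂ) :
    Matrix.vecMulVec (∑ n, c n • A n) (star (∑ m, e m • B m)) =
      ∑ n, ∑ m, (c n * starRingEnd ℂ (e m)) • Matrix.vecMulVec (A n) (star (B m)) := by
  ext i j
  simp only [Matrix.vecMulVec_apply, Matrix.sum_apply, Matrix.smul_apply, Pi.star_apply,
    Finset.sum_apply, Pi.smul_apply, smul_eq_mul]
  rw [show star (∑ m, e m * B m j) = ∑ m, starRingEnd ℂ (e m) * starRingEnd ℂ (B m j) by
    rw [star_sum]; exact Finset.sum_congr rfl fun m _ => by simp [star_mul']]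
  rw [Finset.sum_mul_sum]
  simp only [Complex.star_def]
  exact Finset.sum_congr rfl fun n _ => Finset.sum_congr rfl fun m _ => by ring

lemma sesq_sum12 (Λ : Matrix (Fin N) (Fin N) ℂ →ₗ[ℂ] Matrix (Fin N) (Fin N) ℂ)
    (A B : Fin k → Fin N → ℂ) (c e : Fin k → ℂ) (u w : Fin N → ℂ) :
    sesq Λ (∑ n, c n • A n) (∑ m, e m • B m) u w
      = ∑ n, ∑ m, (c n * starRingEnd ℂ (e m)) * sesq Λ (A n) (B m) u w := by
  simp only [sesq_eq, vecMulVec_sum_sum, map_sum, _root_.map_smul, smul_eq_mul]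

lemma dot_star_sumfam (c : Fin k → ℂ) (us : Fin k → Fin N → ℂ) (y : Fin N → ℂ) :
    star (∑ p, c p • us p) ⬝ᵥ y = ∑ p, starRingEnd ℂ (c p) * (star (us p) ⬝ᵥ y) := by
  simp only [dotProduct, Pi.star_apply, Finset.sum_apply, Pi.smul_apply, smul_eq_mul,
    star_sum, star_mul', Complex.star_def, Finset.sum_mul, Finset.mul_sum]
  rw [Finset.sum_comm]
  exact Finset.sum_congr rfl fun p _ => Finset.sum_congr rfl fun x _ => by ring

lemma dotProduct_sumfam (e : Fin k → ℂ) (ws : Fin k → Fin N → ℂ) (x : Fin N → ℂ) :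
    x ⬝ᵥ (∑ q, e q • ws q) = ∑ q, e q * (x ⬝ᵥ ws q) := by
  simp only [dotProduct, Finset.sum_apply, Pi.smul_apply, smul_eq_mul,
    Finset.mul_sum, Finset.sum_mul]
  rw [Finset.sum_comm]
  exact Finset.sum_congr rfl fun p _ => Finset.sum_congr rfl fun x _ => by ring

lemma sesq_sum3 (Λ : Matrix (Fin N) (Fin N) ℂ →ₗ[ℂ] Matrix (Fin N) (Fin N) ℂ)
    (A B : Fin N → ℂ) (c : Fin k → ℂ) (us : Fin k → Fin N → ℂ) (w : Fin N → ℂ) :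
    sesq Λ A B (∑ p, c p • us p) w = ∑ p, starRingEnd ℂ (c p) * sesq Λ A B (us p) w :=
  dot_star_sumfam c us _

lemma sesq_sum4 (Λ : Matrix (Fin N) (Fin N) ℂ →ₗ[ℂ] Matrix (Fin N) (Fin N) ℂ)
    (A B : Fin N → ℂ) (e : Fin k → ℂ) (ws : Fin k → Fin N → ℂ) (u : Fin N → ℂ) :
    sesq Λ A B u (∑ q, e q • ws q) = ∑ q, e q * sesq Λ A B u (ws q) := by
  unfold sesq
  rw [Matrix.dotProduct_mulVec, dotProduct_sumfam]
  simp only [← Matrix.dotProduct_mulVec]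

lemma sesq_smul3 (Λ : Matrix (Fin N) (Fin N) ℂ →ₗ[ℂ] Matrix (Fin N) (Fin N) ℂ)
    (A B : Fin N → ℂ) (c : ℂ) (u w : Fin N → ℂ) :
    sesq Λ A B (c • u) w = starRingEnd ℂ c * sesq Λ A B u w := by
  unfold sesq
  rw [star_smul, smul_dotProduct]
  simp [Complex.star_def]

lemma sesq_smul4 (Λ : Matrix (Fin N) (Fin N) ℂ →ₗ[ℂ] Matrix (Fin N) (Fin N) ℂ)
    (A B : Fin N → ℂ) (c : ℂ) (u w : Fin N → ℂ) :
    sesq Λ A B u (c • w) = c * sesq Λ A B u w := by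
  unfold sesq
  rw [Matrix.mulVec_smul, dotProduct_smul]
  simp

lemma Qform (Λ : Matrix (Fin N) (Fin N) ℂ →ₗ[ℂ] Matrix (Fin N) (Fin N) ℂ)
    (ψ v : Fin N × Fin N → ℂ) :
    star v ⬝ᵥ (blockMap (⇑Λ) (outer ψ)).mulVec v
      = ∑ i, ∑ j, sesq Λ (fun s => ψ (i, s)) (fun s => ψ (j, s))
          (fun s => v (i, s)) (fun s => v (j, s)) := by
  have hblock : ∀ i j : Fin N, (Matrix.of fun s t => outer ψ (i, s) (j, t))
      = Matrix.vecMulVec (fun s => ψ (i, s)) (star fun t => ψ (j, t)) := by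
    intro i j; ext s t
    simp [outer, Matrix.vecMulVec_apply]
  simp only [sesq, dotProduct, Matrix.mulVec, blockMap, Matrix.of_apply,
    Fintype.sum_prod_type, Pi.star_apply, hblock]
  simp only [Finset.mul_sum]
  exact Finset.sum_congr rfl fun i _ => Finset.sum_comm

lemma sum_swap4 {α β : Type*} [Fintype α] [Fintype β]
    (f : α → α → β → β → ℂ) :
    (∑ i, ∑ j, ∑ n, ∑ m, f i j n m) = ∑ n, ∑ m, ∑ i, ∑ j, f i j n m :=
  calc (∑ i, ∑ j, ∑ n, ∑ m, f i j n m)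
      = ∑ i, ∑ n, ∑ j, ∑ m, f i j n m :=
        Finset.sum_congr rfl fun i _ => Finset.sum_comm
    _ = ∑ n, ∑ i, ∑ j, ∑ m, f i j n m := Finset.sum_comm
    _ = ∑ n, ∑ i, ∑ m, ∑ j, f i j n m :=
        Finset.sum_congr rfl fun n _ => Finset.sum_congr rfl fun i _ => Finset.sum_comm
    _ = ∑ n, ∑ m, ∑ i, ∑ j, f i j n m :=
        Finset.sum_congr rfl fun n _ => Finset.sum_comm

lemma Q_expand (Λ : Matrix (Fin N) (Fin N) ℂ →ₗ[ℂ] Matrix (Fin N) (Fin N) ℂ)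
    (d a : Fin k → Fin N → ℂ) (μ : Fin k → ℝ) (v : Fin N × Fin N → ℂ) :
    star v ⬝ᵥ (blockMap (⇑Λ)
        (outer (fun p => ∑ n, (Real.sqrt (μ n) : ℂ) * d n p.1 * a n p.2))).mulVec v
      = ∑ n, ∑ m, ((Real.sqrt (μ n) : ℂ) * (Real.sqrt (μ m) : ℂ)) *
          sesq Λ (a n) (a m) (fun s => ∑ i, starRingEnd ℂ (d n i) * v (i, s))
                             (fun s => ∑ j, starRingEnd ℂ (d m j) * v (j, s)) := by
  have hrow : ∀ i : Fin N,
      (fun s => ∑ n, (Real.sqrt (μ n) : ℂ) * d n i * a n s)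
        = ∑ n, ((Real.sqrt (μ n) : ℂ) * d n i) • a n := by
    intro i; funext s
    simp [Finset.sum_apply, mul_assoc]
  have hc : ∀ n : Fin k, (fun s => ∑ i, starRingEnd ℂ (d n i) * v (i, s))
      = ∑ i, (starRingEnd ℂ (d n i)) • (fun s => v (i, s)) := by
    intro n; funext s
    simp [Finset.sum_apply]
  rw [Qform]
  calc
    ∑ i, ∑ j, sesq Λ (fun s => ∑ n, (Real.sqrt (μ n) : ℂ) * d n i * a n s)
        (fun s => ∑ n, (Real.sqrt (μ n) : ℂ) * d n j * a n s)
        (fun s => v (i, s)) (fun s => v (j, s))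
      = ∑ i, ∑ j, ∑ n, ∑ m, (((Real.sqrt (μ n) : ℂ) * d n i) *
          starRingEnd ℂ ((Real.sqrt (μ m) : ℂ) * d m j)) *
          sesq Λ (a n) (a m) (fun s => v (i, s)) (fun s => v (j, s)) := by
        refine Finset.sum_congr rfl fun i _ => Finset.sum_congr rfl fun j _ => ?_
        rw [hrow i, hrow j, sesq_sum12]
    _ = ∑ n, ∑ m, ∑ i, ∑ j, (((Real.sqrt (μ n) : ℂ) * d n i) *
          starRingEnd ℂ ((Real.sqrt (μ m) : ℂ) * d m j)) *
          sesq Λ (a n) (a m) (fun s => v (i, s)) (fun s => v (j, s)) := by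
        exact sum_swap4 _
    _ = ∑ n, ∑ m, ((Real.sqrt (μ n) : ℂ) * (Real.sqrt (μ m) : ℂ)) *
          sesq Λ (a n) (a m) (fun s => ∑ i, starRingEnd ℂ (d n i) * v (i, s))
                             (fun s => ∑ j, starRingEnd ℂ (d m j) * v (j, s)) := by
        refine Finset.sum_congr rfl fun n _ => Finset.sum_congr rfl fun m _ => ?_
        rw [hc n, hc m, sesq_sum3]
        simp only [sesq_sum4, Complex.conj_conj, _root_.map_mul, Complex.conj_ofReal]
        simp only [Finset.mul_sum]
        refine Finset.sum_congr rfl fun i _ => Finset.sum_congr rfl fun j _ => ?_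
        ring

lemma sum_factor {α β : Type*} [Fintype α] [Fintype β] (c : ℂ) (f : α → ℂ) (g : β → ℂ) :
    (∑ i, ∑ s, c * f i * g s) = c * (∑ i, f i) * (∑ s, g s) := by
  rw [mul_assoc, Finset.sum_mul_sum, Finset.mul_sum]
  refine Finset.sum_congr rfl fun i _ => ?_
  rw [Finset.mul_sum]
  exact Finset.sum_congr rfl fun sJ _ => by ring

lemma orth_conj {d : Fin k → Fin N → ℂ} (hd : OrthonormalFam d) (n m : Fin k) :
    (∑ i, starRingEnd ℂ (d n i) * d m i) = if n = m then (1 : ℂ) else 0 := by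
  simpa [dotProduct, Complex.star_def] using hd n m

lemma unit_dec (d a : Fin k → Fin N → ℂ) (μ : Fin k → ℝ) (hd : OrthonormalFam d)
    (ha : OrthonormalFam a) (hμ : ∀ n, 0 ≤ μ n) (hs : (∑ n, μ n) = 1) :
    IsUnitVec (fun p : Fin N × Fin N => ∑ n, (Real.sqrt (μ n) : ℂ) * d n p.1 * a n p.2) := by
  unfold IsUnitVec
  have key : (∑ p : Fin N × Fin N,
      (Complex.normSq (∑ n, (Real.sqrt (μ n) : ℂ) * d n p.1 * a n p.2) : ℂ)) = 1 := by
    simp only [Complex.normSq_eq_conj_mul_self, map_sum, _root_.map_mul, Complex.conj_ofReal]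
    rw [Fintype.sum_prod_type]
    calc ∑ i, ∑ sj, (∑ n, (Real.sqrt (μ n) : ℂ) * starRingEnd ℂ (d n i) * starRingEnd ℂ (a n sj))
            * (∑ m, (Real.sqrt (μ m) : ℂ) * d m i * a m sj)
        = ∑ i, ∑ sj, ∑ n, ∑ m, ((Real.sqrt (μ n) : ℂ) * (Real.sqrt (μ m) : ℂ)) *
            (starRingEnd ℂ (d n i) * d m i) * (starRingEnd ℂ (a n sj) * a m sj) := by
          refine Finset.sum_congr rfl fun i _ => Finset.sum_congr rfl fun sj _ => ?_
          refine (Finset.sum_mul_sum _ _ _ _).trans ?_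
          exact Finset.sum_congr rfl fun n _ => Finset.sum_congr rfl fun m _ => by ring
      _ = ∑ n, ∑ m, ∑ i, ∑ sj, ((Real.sqrt (μ n) : ℂ) * (Real.sqrt (μ m) : ℂ)) *
            (starRingEnd ℂ (d n i) * d m i) * (starRingEnd ℂ (a n sj) * a m sj) :=
          sum_swap4 _
      _ = ∑ n, ∑ m, ((Real.sqrt (μ n) : ℂ) * (Real.sqrt (μ m) : ℂ)) *
            (∑ i, starRingEnd ℂ (d n i) * d m i) * (∑ sj, starRingEnd ℂ (a n sj) * a m sj) := by
          refine Finset.sum_congr rfl fun n _ => Finset.sum_congr rfl fun m _ => ?_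
          rw [← sum_factor]
      _ = ∑ n, ((μ n : ℝ) : ℂ) := by
          refine Finset.sum_congr rfl fun n _ => ?_
          rw [Finset.sum_eq_single n]
          · rw [orth_conj hd, orth_conj ha]
            simp [← Complex.ofReal_mul, Real.mul_self_sqrt (hμ n)]
          · intro m _ hm
            rw [orth_conj hd, orth_conj ha]
            simp [Ne.symm hm]
          · intro h; exact absurd (Finset.mem_univ n) h
      _ = 1 := by
          rw [← Complex.ofReal_sum, hs, Complex.ofReal_one]
  have := key
  rw [← Complex.ofReal_sum] at this
  exact_mod_cast this

lemma rank_dec (d a : Fin k → Fin N → ℂ) (μ : Fin k → ℝ) :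
    schmidtRank (fun p : Fin N × Fin N => ∑ n, (Real.sqrt (μ n) : ℂ) * d n p.1 * a n p.2) ≤ k := by
  unfold schmidtRank
  have hfac : matOfVec (fun p : Fin N × Fin N => ∑ n, (Real.sqrt (μ n) : ℂ) * d n p.1 * a n p.2)
      = (Matrix.of fun (i : Fin N) (n : Fin k) => (Real.sqrt (μ n) : ℂ) * d n i) *
        (Matrix.of fun (n : Fin k) (sj : Fin N) => a n sj) := by
    ext i sj
    simp [matOfVec, Matrix.mul_apply]
  rw [hfac]
  exact le_trans (Matrix.rank_mul_le_left _ _)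
    (le_trans (Matrix.rank_le_card_width _) (by simp))

lemma std_orth (hkN : k ≤ N) :
    OrthonormalFam (fun (n : Fin k) (i : Fin N) => if i = Fin.castLE hkN n then (1 : ℂ) else 0) := by
  intro n m
  by_cases h : n = m
  · subst h
    rw [if_pos rfl]
    simp only [dotProduct, Pi.star_apply]
    rw [Finset.sum_congr rfl (fun i _ => show
        star (if i = Fin.castLE hkN n then (1:ℂ) else 0) * (if i = Fin.castLE hkN n then (1:ℂ) else 0)
          = if i = Fin.castLE hkN n then (1:ℂ) else 0 by split <;> simp)]
    simp
  · rw [if_neg h]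
    apply Finset.sum_eq_zero
    intro i _
    simp only [Pi.star_apply]
    rcases eq_or_ne i (Fin.castLE hkN m) with hi | hi
    · have : i ≠ Fin.castLE hkN n := by
        rw [hi]; exact fun hc => h (Fin.castLE_injective hkN hc).symm
      simp [this]
    · simp [hi]

lemma forward_step {N k : ℕ} (hkN : k ≤ N)
    (Λ : Matrix (Fin N) (Fin N) ℂ →ₗ[ℂ] Matrix (Fin N) (Fin N) ℂ)
    (hkp : kPositive k (⇑Λ))
    (a b : Fin k → Fin N → ℂ) (ha : OrthonormalFam a) (hb : OrthonormalFam b)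
    (μ : Fin k → ℝ) (hμ : ∀ i, 0 ≤ μ i) (hsum : (∑ i, μ i) = 1) :
    0 ≤ ∑ n, ∑ m, ((Real.sqrt (μ n * μ m) : ℂ) *
      (star (b n) ⬝ᵥ (Λ (Matrix.vecMulVec (a n) (star (a m)))).mulVec (b m))) := by
  classical
  set d : Fin k → Fin N → ℂ := fun n i => if i = Fin.castLE hkN n then 1 else 0 with hd_def
  have hd : OrthonormalFam d := std_orth hkN
  have h0 := (hkp _ (unit_dec d a μ hd ha hμ hsum) (rank_dec d a μ)).dotProduct_mulVec_nonneg
    (fun p : Fin N × Fin N => ∑ q, d q p.1 * b q p.2)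
  rw [Q_expand] at h0
  have hco : ∀ n : Fin k,
      (fun sj : Fin N => ∑ i, starRingEnd ℂ (d n i) * ∑ q, d q i * b q sj) = b n := by
    intro n; funext sj
    calc ∑ i, starRingEnd ℂ (d n i) * ∑ q, d q i * b q sj
        = ∑ i, ∑ q, starRingEnd ℂ (d n i) * (d q i * b q sj) :=
          Finset.sum_congr rfl fun i _ => Finset.mul_sum _ _ _
      _ = ∑ q, (∑ i, starRingEnd ℂ (d n i) * d q i) * b q sj := by
          rw [Finset.sum_comm]
          refine Finset.sum_congr rfl fun q _ => ?_
          rw [Finset.sum_mul]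
          exact Finset.sum_congr rfl fun i _ => by ring
      _ = b n sj := by
          simp only [orth_conj hd, ite_mul, one_mul, zero_mul]
          rw [Finset.sum_ite_eq]
          simp
  simp only [hco] at h0
  have hcoef : ∀ n m : Fin k, ((Real.sqrt (μ n * μ m) : ℝ) : ℂ)
      = ((Real.sqrt (μ n) : ℝ) : ℂ) * ((Real.sqrt (μ m) : ℝ) : ℂ) := by
    intro n m; rw [Real.sqrt_mul (hμ n)]; push_cast; ring
  refine le_of_le_of_eq h0 ?_
  exact Finset.sum_congr rfl fun n _ => Finset.sum_congr rfl fun m _ => by rw [hcoef]; rfl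

lemma orthScale (hkN : k ≤ N) (w : Fin k → Fin N → ℂ) (μ : Fin k → ℝ)
    (hμ : ∀ n, 0 ≤ μ n)
    (hw : ∀ n m, star (w n) ⬝ᵥ w m = if n = m then ((μ n : ℝ) : ℂ) else 0) :
    ∃ b : Fin k → Fin N → ℂ, OrthonormalFam b ∧
      ∀ n, w n = fun sj => ((Real.sqrt (μ n) : ℝ) : ℂ) * b n sj := by
  classical
  have hzero : ∀ n, μ n = 0 → w n = 0 := by
    intro n hn
    have h := hw n n
    rw [if_pos rfl, hn] at h
    exact dotProduct_star_self_eq_zero.mp (by simpa using h)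
  let toE : (Fin N → ℂ) → EuclideanSpace ℂ (Fin N) := (WithLp.equiv 2 (Fin N → ℂ)).symm
  have hinner : ∀ x y : Fin N → ℂ, (inner ℂ (toE x) (toE y) : ℂ) = star x ⬝ᵥ y := by
    intro x y
    rw [EuclideanSpace.inner_eq_star_dotProduct]
    exact dotProduct_comm _ _
  let v : Fin N → EuclideanSpace ℂ (Fin N) := fun i =>
    if h : (i : ℕ) < k then
      (((Real.sqrt (μ ⟨i, h⟩))⁻¹ : ℝ) : ℂ) • toE (w ⟨i, h⟩)
    else 0
  let s : Set (Fin N) := {i | ∃ h : (i : ℕ) < k, μ ⟨i, h⟩ ≠ 0}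
  have horth : Orthonormal ℂ (s.restrict v) := by
    rw [orthonormal_iff_ite]
    rintro ⟨i, hik, hiμ⟩ ⟨j, hjk, hjμ⟩
    have hvi : v i = (((Real.sqrt (μ ⟨i, hik⟩))⁻¹ : ℝ) : ℂ) • toE (w ⟨i, hik⟩) := dif_pos hik
    have hvj : v j = (((Real.sqrt (μ ⟨j, hjk⟩))⁻¹ : ℝ) : ℂ) • toE (w ⟨j, hjk⟩) := dif_pos hjk
    show inner ℂ (v i) (v j) = _
    simp only [Set.restrict_apply, hvi, hvj, inner_smul_left, inner_smul_right, hinner,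
      Complex.conj_ofReal, hw]
    by_cases hij : i = j
    · subst hij
      simp only [Subtype.mk.injEq, if_pos rfl, if_true, eq_self_iff_true]
      have hxx : Real.sqrt (μ ⟨i, hjk⟩) = Real.sqrt (μ ⟨i, hik⟩) := rfl
      rw [hxx]
      norm_cast
      rw [← mul_assoc, ← mul_inv, Real.mul_self_sqrt (hμ _), inv_mul_cancel₀ hiμ]
    · have hne : (⟨(i : ℕ), hik⟩ : Fin k) ≠ ⟨(j : ℕ), hjk⟩ :=
        fun hc => hij (Fin.val_injective (Fin.mk.inj hc))
      have hne' : (⟨i, hik, hiμ⟩ : s) ≠ ⟨j, hjk, hjμ⟩ :=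
        fun hc => hij (congrArg Subtype.val hc)
      rw [if_neg hne, if_neg hne']
      simp
  obtain ⟨B, hB⟩ := horth.exists_orthonormalBasis_extension_of_card_eq
    (by simp [finrank_euclideanSpace])
  refine ⟨fun n => WithLp.equiv 2 (Fin N → ℂ) (B (Fin.castLE hkN n)), ?_, ?_⟩
  · intro n m
    have h := orthonormal_iff_ite.mp B.orthonormal (Fin.castLE hkN n) (Fin.castLE hkN m)
    have h2 : star (WithLp.equiv 2 (Fin N → ℂ) (B (Fin.castLE hkN n))) ⬝ᵥ
        WithLp.equiv 2 (Fin N → ℂ) (B (Fin.castLE hkN m)) = if n = m then (1:ℂ) else 0 := by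
      rw [← hinner]
      simp only [toE, Equiv.symm_apply_apply]
      rw [h]
      congr 1
      simp only [eq_iff_iff]
      exact ⟨fun hc => Fin.castLE_injective hkN hc, fun hc => by rw [hc]⟩
    exact h2
  · intro n
    by_cases hn : μ n = 0
    · funext sj
      rw [hzero n hn, hn]
      simp
    · have hik : ((Fin.castLE hkN n : Fin N) : ℕ) < k := by simpa using n.isLt
      have heq : (⟨(Fin.castLE hkN n : Fin N), hik⟩ : Fin k) = n := by
        apply Fin.ext; simp
      have hs : (Fin.castLE hkN n : Fin N) ∈ s := ⟨hik, by rw [heq]; exact hn⟩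
      have hBv := hB (Fin.castLE hkN n) hs
      have hv : v (Fin.castLE hkN n)
          = (((Real.sqrt (μ n))⁻¹ : ℝ) : ℂ) • toE (w n) := by
        rw [show v (Fin.castLE hkN n)
            = (((Real.sqrt (μ ⟨(Fin.castLE hkN n : Fin N), hik⟩))⁻¹ : ℝ) : ℂ)
              • toE (w ⟨(Fin.castLE hkN n : Fin N), hik⟩) from dif_pos hik, heq]
      funext sj
      show w n sj = ((Real.sqrt (μ n) : ℝ) : ℂ)
        * (WithLp.equiv 2 (Fin N → ℂ) (B (Fin.castLE hkN n))) sj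
      rw [hBv, hv]
      have : WithLp.equiv 2 (Fin N → ℂ) ((((Real.sqrt (μ n))⁻¹ : ℝ) : ℂ) • toE (w n))
          = (((Real.sqrt (μ n))⁻¹ : ℝ) : ℂ) • w n := by
        show (((Real.sqrt (μ n))⁻¹ : ℝ) : ℂ) • WithLp.equiv 2 (Fin N → ℂ) (toE (w n)) = _
        simp only [toE, Equiv.apply_symm_apply]
      rw [this]
      have hsne : (Real.sqrt (μ n) : ℝ) ≠ 0 := Real.sqrt_ne_zero'.mpr
        (lt_of_le_of_ne (hμ n) (Ne.symm hn))
      simp only [Pi.smul_apply, smul_eq_mul]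
      rw [← mul_assoc, ← Complex.ofReal_mul]
      rw [mul_inv_cancel₀ hsne]
      simp

lemma spectral_package {M : ℕ} (G : Matrix (Fin M) (Fin M) ℂ) (hG : G.PosSemidef) :
    ∃ (U : Matrix (Fin M) (Fin M) ℂ) (lam : Fin M → ℝ),
      (∀ t, 0 ≤ lam t) ∧
      (∀ t t', (∑ i, starRingEnd ℂ (U i t) * U i t') = if t = t' then (1:ℂ) else 0) ∧
      (∀ i j, (∑ t, U i t * starRingEnd ℂ (U j t)) = if i = j then (1:ℂ) else 0) ∧
      (∀ t, G *ᵥ (fun i => U i t) = fun i => ((lam t : ℝ) : ℂ) * U i t) ∧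
      G.rank = (Finset.univ.filter fun t => lam t ≠ 0).card := by
  classical
  have hH := hG.1
  refine ⟨(hH.eigenvectorUnitary : Matrix (Fin M) (Fin M) ℂ), hH.eigenvalues,
    hG.eigenvalues_nonneg, ?_, ?_, ?_, ?_⟩
  · intro t t'
    have h := Matrix.mem_unitaryGroup_iff'.mp hH.eigenvectorUnitary.2
    calc (∑ i, starRingEnd ℂ ((hH.eigenvectorUnitary : Matrix (Fin M) (Fin M) ℂ) i t) *
            (hH.eigenvectorUnitary : Matrix (Fin M) (Fin M) ℂ) i t')
        = (star (hH.eigenvectorUnitary : Matrix (Fin M) (Fin M) ℂ) *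
            (hH.eigenvectorUnitary : Matrix (Fin M) (Fin M) ℂ)) t t' := by
          rw [Matrix.star_eq_conjTranspose, Matrix.mul_apply]
          exact Finset.sum_congr rfl fun i _ => by rw [Matrix.conjTranspose_apply]; rfl
      _ = (1 : Matrix (Fin M) (Fin M) ℂ) t t' := by rw [h]
      _ = if t = t' then 1 else 0 := Matrix.one_apply
  · intro i j
    have h := Matrix.mem_unitaryGroup_iff.mp hH.eigenvectorUnitary.2
    calc (∑ t, (hH.eigenvectorUnitary : Matrix (Fin M) (Fin M) ℂ) i t *
            starRingEnd ℂ ((hH.eigenvectorUnitary : Matrix (Fin M) (Fin M) ℂ) j t))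
        = ((hH.eigenvectorUnitary : Matrix (Fin M) (Fin M) ℂ) *
            star (hH.eigenvectorUnitary : Matrix (Fin M) (Fin M) ℂ)) i j := by
          rw [Matrix.star_eq_conjTranspose, Matrix.mul_apply]
          exact Finset.sum_congr rfl fun t _ => by rw [Matrix.conjTranspose_apply]; rfl
      _ = (1 : Matrix (Fin M) (Fin M) ℂ) i j := by rw [h]
      _ = if i = j then 1 else 0 := Matrix.one_apply
  · intro t
    have h := hH.mulVec_eigenvectorBasis t
    have hcol : (fun i => (hH.eigenvectorUnitary : Matrix (Fin M) (Fin M) ℂ) i t)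
        = ⇑(hH.eigenvectorBasis t) := by
      funext i; exact hH.eigenvectorUnitary_apply i t
    rw [hcol, h]
    funext i
    simp [Complex.real_smul]
  · rw [hH.rank_eq_card_non_zero_eigs]
    simp [Fintype.card_subtype]

lemma sum_rot3 {α β : Type*} [Fintype α] [Fintype β] (f : α → β → β → ℂ) :
    (∑ s, ∑ n, ∑ m, f s n m) = ∑ n, ∑ m, ∑ s, f s n m :=
  calc (∑ s, ∑ n, ∑ m, f s n m) = ∑ n, ∑ s, ∑ m, f s n m := Finset.sum_comm
    _ = ∑ n, ∑ m, ∑ s, f s n m := Finset.sum_congr rfl fun n _ => Finset.sum_comm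

lemma gram_psd (y : Fin k → Fin N → ℂ) :
    (Matrix.of fun n m : Fin k => star (y n) ⬝ᵥ y m).PosSemidef := by
  refine Matrix.PosSemidef.of_dotProduct_mulVec_nonneg ?_ ?_
  · ext n m
    simp only [Matrix.conjTranspose_apply, Matrix.of_apply, dotProduct, Pi.star_apply,
      star_sum, star_mul', star_star]
    exact Finset.sum_congr rfl fun i _ => by ring
  · intro x
    have key : star x ⬝ᵥ ((Matrix.of fun n m : Fin k => star (y n) ⬝ᵥ y m) *ᵥ x)
        = star (fun sj => ∑ n, x n * y n sj) ⬝ᵥ (fun sj => ∑ n, x n * y n sj) := by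
      calc star x ⬝ᵥ ((Matrix.of fun n m : Fin k => star (y n) ⬝ᵥ y m) *ᵥ x)
          = ∑ n, ∑ m, ∑ sj, (star (x n) * star (y n sj)) * (x m * y m sj) := by
            simp only [dotProduct, Matrix.mulVec, Matrix.of_apply, Pi.star_apply,
              Finset.sum_mul, Finset.mul_sum]
            refine Finset.sum_congr rfl fun n _ => Finset.sum_congr rfl fun m _ =>
              Finset.sum_congr rfl fun sj _ => by ring
        _ = ∑ sj, ∑ n, ∑ m, (star (x n) * star (y n sj)) * (x m * y m sj) :=
            (sum_rot3 _).symm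
        _ = star (fun sj => ∑ n, x n * y n sj) ⬝ᵥ (fun sj => ∑ n, x n * y n sj) := by
            simp only [dotProduct, Pi.star_apply, star_sum, star_mul',
              Finset.sum_mul, Finset.mul_sum]
            refine Finset.sum_congr rfl fun sj _ => ?_
            rw [Finset.sum_comm]
    rw [key]
    exact dotProduct_star_self_nonneg _

lemma claim_pos (hkN : k ≤ N)
    (Λ : Matrix (Fin N) (Fin N) ℂ →ₗ[ℂ] Matrix (Fin N) (Fin N) ℂ)
    (H : ∀ a b : Fin k → Fin N → ℂ, OrthonormalFam a → OrthonormalFam b →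
        ∀ μ : Fin k → ℝ, (∀ i, 0 ≤ μ i) → (∑ i, μ i) = 1 →
          (∑ n, ∑ m, ((Real.sqrt (μ n * μ m) : ℂ) * sesq Λ (a n) (a m) (b n) (b m))).im = 0 ∧
          0 ≤ (∑ n, ∑ m, ((Real.sqrt (μ n * μ m) : ℂ) * sesq Λ (a n) (a m) (b n) (b m))).re)
    (a : Fin k → Fin N → ℂ) (ha : OrthonormalFam a) (y : Fin k → Fin N → ℂ) :
    0 ≤ ∑ n, ∑ m, sesq Λ (a n) (a m) (y n) (y m) := by
  classical
  obtain ⟨F, lam, hlam0, hFcol, hFrow, hFeig, -⟩ :=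
    spectral_package (Matrix.of fun n m : Fin k => star (y n) ⬝ᵥ y m) (gram_psd y)
  set z : Fin k → Fin N → ℂ := fun p sj => ∑ n, F n p * y n sj with hz_def
  have hgramz : ∀ p q, star (z p) ⬝ᵥ z q = if p = q then ((lam p : ℝ) : ℂ) else 0 := by
    intro p q
    have hcol : ∀ n, (∑ m, (star (y n) ⬝ᵥ y m) * F m q) = ((lam q : ℝ) : ℂ) * F n q := by
      intro n
      have := congrFun (hFeig q) n
      simpa [Matrix.mulVec, dotProduct, Matrix.of_apply] using this
    have hD : ∀ n m, (∑ sj, starRingEnd ℂ (y n sj) * y m sj) = star (y n) ⬝ᵥ y m := by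
      intro n m; simp [dotProduct, Complex.star_def]
    calc star (z p) ⬝ᵥ z q
        = ∑ sj, ∑ n, ∑ m, starRingEnd ℂ (F n p) * F m q *
            (starRingEnd ℂ (y n sj) * y m sj) := by
          simp only [dotProduct, Pi.star_apply, hz_def]
          refine Finset.sum_congr rfl fun sj _ => ?_
          rw [show star (∑ n, F n p * y n sj)
              = ∑ n, starRingEnd ℂ (F n p) * starRingEnd ℂ (y n sj) from by
            rw [star_sum]; exact Finset.sum_congr rfl fun n _ => by simp [star_mul']]
          rw [Finset.sum_mul_sum]
          exact Finset.sum_congr rfl fun n _ => Finset.sum_congr rfl fun m _ => by ring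
      _ = ∑ n, ∑ m, starRingEnd ℂ (F n p) * F m q *
            (∑ sj, starRingEnd ℂ (y n sj) * y m sj) := by
          rw [sum_rot3]
          refine Finset.sum_congr rfl fun n _ => Finset.sum_congr rfl fun m _ => ?_
          rw [Finset.mul_sum]
      _ = ∑ n, starRingEnd ℂ (F n p) * (((lam q : ℝ) : ℂ) * F n q) := by
          refine Finset.sum_congr rfl fun n _ => ?_
          calc ∑ m, starRingEnd ℂ (F n p) * F m q * (∑ sj, starRingEnd ℂ (y n sj) * y m sj)
              = starRingEnd ℂ (F n p) * ∑ m, (star (y n) ⬝ᵥ y m) * F m q := by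
                rw [Finset.mul_sum]
                exact Finset.sum_congr rfl fun m _ => by rw [hD n m]; ring
            _ = starRingEnd ℂ (F n p) * (((lam q : ℝ) : ℂ) * F n q) := by rw [hcol n]
      _ = ((lam q : ℝ) : ℂ) * ∑ n, starRingEnd ℂ (F n p) * F n q := by
          rw [Finset.mul_sum]
          exact Finset.sum_congr rfl fun n _ => by ring
      _ = if p = q then ((lam p : ℝ) : ℂ) else 0 := by
          rw [hFcol p q]
          by_cases hpq : p = q
          · subst hpq; simp
          · simp [hpq]
  have hyz : ∀ n, y n = ∑ p, starRingEnd ℂ (F n p) • z p := by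
    intro n
    funext sj
    calc y n sj = ∑ m, (if m = n then (1:ℂ) else 0) * y m sj := by
          simp only [ite_mul, one_mul, zero_mul]
          rw [Finset.sum_ite_eq' Finset.univ n (fun m => y m sj)]
          simp
      _ = ∑ m, (∑ p, F m p * starRingEnd ℂ (F n p)) * y m sj := by
          refine Finset.sum_congr rfl fun m _ => ?_
          rw [hFrow m n]
      _ = ∑ p, starRingEnd ℂ (F n p) * z p sj := by
          simp only [hz_def, Finset.sum_mul, Finset.mul_sum]
          rw [Finset.sum_comm]
          exact Finset.sum_congr rfl fun p _ => Finset.sum_congr rfl fun m _ => by ring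
      _ = (∑ p, starRingEnd ℂ (F n p) • z p) sj := by
          simp [Finset.sum_apply]
  obtain ⟨b, hb, hzb⟩ := orthScale hkN z lam hlam0 hgramz
  have ha' : OrthonormalFam (fun p => ∑ n, F n p • a n) := by
    intro p q
    calc star (∑ n, F n p • a n) ⬝ᵥ (∑ m, F m q • a m)
        = ∑ n, starRingEnd ℂ (F n p) * (star (a n) ⬝ᵥ (∑ m, F m q • a m)) :=
          dot_star_sumfam _ _ _
      _ = ∑ n, ∑ m, starRingEnd ℂ (F n p) * (F m q * (star (a n) ⬝ᵥ a m)) := by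
          refine Finset.sum_congr rfl fun n _ => ?_
          rw [dotProduct_sumfam, Finset.mul_sum]
      _ = ∑ n, starRingEnd ℂ (F n p) * F n q := by
          refine Finset.sum_congr rfl fun n _ => ?_
          rw [Finset.sum_eq_single n]
          · rw [ha n n, if_pos rfl]; ring
          · intro m _ hm; rw [ha n m, if_neg (Ne.symm hm)]; ring
          · intro hmem; exact absurd (Finset.mem_univ n) hmem
      _ = if p = q then 1 else 0 := hFcol p q
  have hT : (∑ n, ∑ m, sesq Λ (a n) (a m) (y n) (y m))
      = ∑ p, ∑ q, ((Real.sqrt (lam p) : ℂ) * (Real.sqrt (lam q) : ℂ)) *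
          sesq Λ (∑ n, F n p • a n) (∑ m, F m q • a m) (b p) (b q) := by
    calc (∑ n, ∑ m, sesq Λ (a n) (a m) (y n) (y m))
        = ∑ n, ∑ m, ∑ p, ∑ q, (F n p * starRingEnd ℂ (F m q)) *
            sesq Λ (a n) (a m) (z p) (z q) := by
          refine Finset.sum_congr rfl fun n _ => Finset.sum_congr rfl fun m _ => ?_
          rw [hyz n, hyz m, sesq_sum3]
          simp only [sesq_sum4, Complex.conj_conj]
          simp only [Finset.mul_sum]
          exact Finset.sum_congr rfl fun p _ => Finset.sum_congr rfl fun q _ => by ring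
      _ = ∑ p, ∑ q, ∑ n, ∑ m, (F n p * starRingEnd ℂ (F m q)) *
            sesq Λ (a n) (a m) (z p) (z q) := sum_swap4 _
      _ = ∑ p, ∑ q, sesq Λ (∑ n, F n p • a n) (∑ m, F m q • a m) (z p) (z q) := by
          refine Finset.sum_congr rfl fun p _ => Finset.sum_congr rfl fun q _ => ?_
          rw [sesq_sum12]
      _ = ∑ p, ∑ q, ((Real.sqrt (lam p) : ℂ) * (Real.sqrt (lam q) : ℂ)) *
            sesq Λ (∑ n, F n p • a n) (∑ m, F m q • a m) (b p) (b q) := by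
          refine Finset.sum_congr rfl fun p _ => Finset.sum_congr rfl fun q _ => ?_
          have hzp : z p = ((Real.sqrt (lam p) : ℝ) : ℂ) • b p := by
            rw [hzb p]; funext sj; simp
          have hzq : z q = ((Real.sqrt (lam q) : ℝ) : ℂ) • b q := by
            rw [hzb q]; funext sj; simp
          rw [hzp, hzq, sesq_smul3, sesq_smul4, Complex.conj_ofReal]
          ring
  rw [hT]
  set S := ∑ p, lam p with hS_def
  have hS0 : (0:ℝ) ≤ S := by
    rw [hS_def]; exact Finset.sum_nonneg fun p _ => hlam0 p
  rcases eq_or_lt_of_le hS0 with hS | hS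
  · have hall : ∀ p, lam p = 0 := by
      intro p
      have hz0 : (∑ q, lam q) = 0 := by rw [← hS_def]; exact hS.symm
      have := (Finset.sum_eq_zero_iff_of_nonneg (fun q _ => hlam0 q)).mp hz0
      exact this p (Finset.mem_univ p)
    have : ∀ p q : Fin k, ((Real.sqrt (lam p) : ℂ) * (Real.sqrt (lam q) : ℂ)) *
        sesq Λ (∑ n, F n p • a n) (∑ m, F m q • a m) (b p) (b q) = 0 := by
      intro p q
      rw [hall p]
      simp
    rw [Finset.sum_congr rfl fun p _ => Finset.sum_congr rfl fun q _ => this p q]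
    simp
  · set μ' : Fin k → ℝ := fun p => lam p / S with hμ'_def
    have hμ'0 : ∀ p, 0 ≤ μ' p := fun p => div_nonneg (hlam0 p) hS.le
    have hμ's : (∑ p, μ' p) = 1 := by
      rw [hμ'_def]
      rw [← Finset.sum_div]
      exact div_self hS.ne'
    obtain ⟨him, hre⟩ := H _ b ha' hb μ' hμ'0 hμ's
    have hSne : (S : ℂ) ≠ 0 := Complex.ofReal_ne_zero.mpr hS.ne'
    have hsq : ∀ p q : Fin k, ((Real.sqrt (lam p) : ℂ) * (Real.sqrt (lam q) : ℂ))
        = (S : ℂ) * ((Real.sqrt (μ' p * μ' q) : ℝ) : ℂ) := by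
      intro p q
      have hreal : Real.sqrt (μ' p * μ' q) = Real.sqrt (lam p) * Real.sqrt (lam q) / S := by
        rw [show μ' p * μ' q = (lam p * lam q) / (S * S) from by
          simp only [hμ'_def]; rw [div_mul_div_comm]]
        rw [Real.sqrt_div (mul_nonneg (hlam0 p) (hlam0 q)), Real.sqrt_mul_self hS0,
          Real.sqrt_mul (hlam0 p)]
      rw [hreal, Complex.ofReal_div, Complex.ofReal_mul]
      rw [mul_div_assoc']
      rw [mul_comm ((S:ℂ)) _, mul_div_assoc, div_self hSne, mul_one]
    have hTS : (∑ p, ∑ q, ((Real.sqrt (lam p) : ℂ) * (Real.sqrt (lam q) : ℂ)) *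
          sesq Λ (∑ n, F n p • a n) (∑ m, F m q • a m) (b p) (b q))
        = (S : ℂ) * ∑ p, ∑ q, ((Real.sqrt (μ' p * μ' q) : ℝ) : ℂ) *
            sesq Λ (∑ n, F n p • a n) (∑ m, F m q • a m) (b p) (b q) := by
      rw [Finset.mul_sum]
      refine Finset.sum_congr rfl fun p _ => ?_
      rw [Finset.mul_sum]
      refine Finset.sum_congr rfl fun q _ => ?_
      rw [hsq p q]
      ring
    rw [hTS]
    rw [Complex.nonneg_iff]
    constructor
    · rw [Complex.mul_re]
      simp only [Complex.ofReal_re, Complex.ofReal_im, zero_mul, sub_zero]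
      exact mul_nonneg hS.le hre
    · rw [Complex.mul_im]
      simp only [Complex.ofReal_re, Complex.ofReal_im, zero_mul, add_zero]
      rw [him, mul_zero]

lemma sum_rot4 {α : Type*} [Fintype α] (f : α → α → α → α → ℂ) :
    (∑ t, ∑ s, ∑ i, ∑ j, f t s i j) = ∑ s, ∑ i, ∑ j, ∑ t, f t s i j :=
  calc (∑ t, ∑ s, ∑ i, ∑ j, f t s i j) = ∑ s, ∑ t, ∑ i, ∑ j, f t s i j := Finset.sum_comm
    _ = ∑ s, ∑ i, ∑ t, ∑ j, f t s i j := Finset.sum_congr rfl fun s _ => Finset.sum_comm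
    _ = ∑ s, ∑ i, ∑ j, ∑ t, f t s i j :=
        Finset.sum_congr rfl fun s _ => Finset.sum_congr rfl fun i _ => Finset.sum_comm

lemma schmidt_decomp (hkN : k ≤ N) (ψ : Fin N × Fin N → ℂ)
    (hunit : IsUnitVec ψ) (hrank : schmidtRank ψ ≤ k) :
    ∃ (d a : Fin k → Fin N → ℂ) (μ : Fin k → ℝ),
      OrthonormalFam d ∧ OrthonormalFam a ∧ (∀ n, 0 ≤ μ n) ∧ (∑ n, μ n) = 1 ∧
      ψ = fun p => ∑ n, (Real.sqrt (μ n) : ℂ) * d n p.1 * a n p.2 := by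
  classical
  set M : Matrix (Fin N) (Fin N) ℂ := matOfVec ψ with hM_def
  obtain ⟨U, lam, hlam0, hUcol, hUrow, hUeig, hrankG⟩ :=
    spectral_package (M * Mᴴ) (Matrix.posSemidef_self_mul_conjTranspose M)
  have hcard : (Finset.univ.filter fun t => lam t ≠ 0).card ≤ k := by
    rw [← hrankG, Matrix.rank_self_mul_conjTranspose]
    exact hrank
  obtain ⟨T, hST, hTcard⟩ := Finset.exists_superset_card_eq hcard (by simpa using hkN)
  have hlam_out : ∀ t, t ∉ T → lam t = 0 := by
    intro t ht
    by_contra hne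
    exact ht (hST (Finset.mem_filter.mpr ⟨Finset.mem_univ t, hne⟩))
  let e' : Fin k ≃ {x // x ∈ T} := (finCongr hTcard.symm).trans T.equivFin.symm
  let e : Fin k → Fin N := fun n => (e' n : Fin N)
  have he_inj : Function.Injective e :=
    fun n m h => e'.injective (Subtype.coe_injective h)
  have hsumTC : ∀ f : Fin N → ℂ, (∑ n, f (e n)) = ∑ t ∈ T, f t := by
    intro f
    rw [← Finset.sum_coe_sort T f]
    exact Fintype.sum_equiv e' _ _ fun n => rfl
  have hsumTR : ∀ f : Fin N → ℝ, (∑ n, f (e n)) = ∑ t ∈ T, f t := by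
    intro f
    rw [← Finset.sum_coe_sort T f]
    exact Fintype.sum_equiv e' _ _ fun n => rfl
  set wf : Fin N → Fin N → ℂ := fun t sj => ∑ j, starRingEnd ℂ (U j t) * ψ (j, sj) with hwf_def
  have hMG : ∀ i j : Fin N, (M * Mᴴ) j i = ∑ sj, ψ (j, sj) * starRingEnd ℂ (ψ (i, sj)) := by
    intro i j
    rw [Matrix.mul_apply]
    refine Finset.sum_congr rfl fun sj _ => ?_
    rw [Matrix.conjTranspose_apply, hM_def]
    simp [matOfVec, Complex.star_def]
  have hgram_full : ∀ t t', star (wf t) ⬝ᵥ wf t' = if t = t' then ((lam t : ℝ) : ℂ) else 0 := by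
    intro t t'
    have hcol : ∀ j : Fin N, (∑ i, (M * Mᴴ) j i * U i t) = ((lam t : ℝ) : ℂ) * U j t := by
      intro j
      have := congrFun (hUeig t) j
      simpa [Matrix.mulVec, dotProduct] using this
    calc star (wf t) ⬝ᵥ wf t'
        = ∑ sj, ∑ i, ∑ j, U i t * starRingEnd ℂ (U j t') *
            (starRingEnd ℂ (ψ (i, sj)) * ψ (j, sj)) := by
          simp only [dotProduct, Pi.star_apply, hwf_def]
          refine Finset.sum_congr rfl fun sj _ => ?_
          rw [show star (∑ i, starRingEnd ℂ (U i t) * ψ (i, sj))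
              = ∑ i, U i t * starRingEnd ℂ (ψ (i, sj)) from by
            rw [star_sum]; exact Finset.sum_congr rfl fun i _ => by simp [star_mul']]
          rw [Finset.sum_mul_sum]
          exact Finset.sum_congr rfl fun i _ => Finset.sum_congr rfl fun j _ => by ring
      _ = ∑ i, ∑ j, U i t * starRingEnd ℂ (U j t') *
            (∑ sj, starRingEnd ℂ (ψ (i, sj)) * ψ (j, sj)) := by
          rw [sum_rot3]
          refine Finset.sum_congr rfl fun i _ => Finset.sum_congr rfl fun j _ => ?_
          rw [Finset.mul_sum]
      _ = ∑ j, starRingEnd ℂ (U j t') * (((lam t : ℝ) : ℂ) * U j t) := by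
          rw [Finset.sum_comm]
          refine Finset.sum_congr rfl fun j _ => ?_
          calc ∑ i, U i t * starRingEnd ℂ (U j t') *
                (∑ sj, starRingEnd ℂ (ψ (i, sj)) * ψ (j, sj))
              = starRingEnd ℂ (U j t') * ∑ i, (M * Mᴴ) j i * U i t := by
                rw [Finset.mul_sum]
                refine Finset.sum_congr rfl fun i _ => ?_
                rw [hMG i j]
                rw [show (∑ sj, starRingEnd ℂ (ψ (i, sj)) * ψ (j, sj))
                    = ∑ sj, ψ (j, sj) * starRingEnd ℂ (ψ (i, sj)) from
                  Finset.sum_congr rfl fun sj _ => mul_comm _ _]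
                ring
            _ = starRingEnd ℂ (U j t') * (((lam t : ℝ) : ℂ) * U j t) := by rw [hcol j]
      _ = ((lam t : ℝ) : ℂ) * ∑ j, starRingEnd ℂ (U j t') * U j t := by
          rw [Finset.mul_sum]
          exact Finset.sum_congr rfl fun j _ => by ring
      _ = if t = t' then ((lam t : ℝ) : ℂ) else 0 := by
          rw [hUcol t' t]
          by_cases h : t = t'
          · subst h; simp
          · rw [if_neg h, if_neg (Ne.symm h), mul_zero]
  have hzero_full : ∀ t, lam t = 0 → wf t = 0 := by
    intro t ht
    have h := hgram_full t t
    rw [if_pos rfl, ht] at h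
    exact dotProduct_star_self_eq_zero.mp (by simpa using h)
  have hrecon : ∀ i sj, ψ (i, sj) = ∑ t, U i t * wf t sj := by
    intro i sj
    calc ψ (i, sj)
        = ∑ j, (if i = j then (1:ℂ) else 0) * ψ (j, sj) := by
          simp only [ite_mul, one_mul, zero_mul]
          rw [Finset.sum_ite_eq Finset.univ i (fun j => ψ (j, sj))]
          simp
      _ = ∑ j, (∑ t, U i t * starRingEnd ℂ (U j t)) * ψ (j, sj) := by
          refine Finset.sum_congr rfl fun j _ => ?_
          rw [hUrow i j]
      _ = ∑ t, U i t * wf t sj := by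
          simp only [hwf_def, Finset.sum_mul, Finset.mul_sum]
          rw [Finset.sum_comm]
          exact Finset.sum_congr rfl fun t _ => Finset.sum_congr rfl fun j _ => by ring
  have hsum_lam : (∑ t, lam t) = 1 := by
    have key : (∑ t, ((lam t : ℝ) : ℂ)) = 1 := by
      calc (∑ t, ((lam t : ℝ) : ℂ))
          = ∑ t, star (wf t) ⬝ᵥ wf t := by
            refine Finset.sum_congr rfl fun t _ => ?_
            rw [hgram_full t t, if_pos rfl]
        _ = ∑ t, ∑ sj, ∑ i, ∑ j, (U i t * starRingEnd ℂ (U j t)) *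
              (starRingEnd ℂ (ψ (i, sj)) * ψ (j, sj)) := by
            refine Finset.sum_congr rfl fun t _ => ?_
            simp only [dotProduct, Pi.star_apply, hwf_def]
            refine Finset.sum_congr rfl fun sj _ => ?_
            rw [show star (∑ i, starRingEnd ℂ (U i t) * ψ (i, sj))
                = ∑ i, U i t * starRingEnd ℂ (ψ (i, sj)) from by
              rw [star_sum]; exact Finset.sum_congr rfl fun i _ => by simp [star_mul']]
            rw [Finset.sum_mul_sum]
            exact Finset.sum_congr rfl fun i _ => Finset.sum_congr rfl fun j _ => by ring
        _ = ∑ sj, ∑ i, ∑ j, (∑ t, U i t * starRingEnd ℂ (U j t)) *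
              (starRingEnd ℂ (ψ (i, sj)) * ψ (j, sj)) := by
            rw [sum_rot4]
            refine Finset.sum_congr rfl fun sj _ => Finset.sum_congr rfl fun i _ =>
              Finset.sum_congr rfl fun j _ => ?_
            rw [Finset.sum_mul]
        _ = ∑ sj, ∑ i, starRingEnd ℂ (ψ (i, sj)) * ψ (i, sj) := by
            refine Finset.sum_congr rfl fun sj _ => Finset.sum_congr rfl fun i _ => ?_
            rw [Finset.sum_eq_single i]
            · rw [hUrow i i, if_pos rfl, one_mul]
            · intro j _ hj
              rw [hUrow i j, if_neg (fun h => hj h.symm), zero_mul]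
            · intro h; exact absurd (Finset.mem_univ i) h
        _ = 1 := by
            have hu := hunit
            unfold IsUnitVec at hu
            calc ∑ sj, ∑ i, starRingEnd ℂ (ψ (i, sj)) * ψ (i, sj)
                = ∑ i, ∑ sj, starRingEnd ℂ (ψ (i, sj)) * ψ (i, sj) := Finset.sum_comm
              _ = ∑ p : Fin N × Fin N, ((Complex.normSq (ψ p) : ℝ) : ℂ) := by
                  rw [Fintype.sum_prod_type]
                  exact Finset.sum_congr rfl fun i _ => Finset.sum_congr rfl fun sj _ =>
                    Complex.normSq_eq_conj_mul_self.symm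
              _ = 1 := by rw [← Complex.ofReal_sum, hu, Complex.ofReal_one]
    have : ((∑ t, lam t : ℝ) : ℂ) = 1 := by rw [Complex.ofReal_sum]; exact key
    exact_mod_cast this
  have hgramk : ∀ n m, star (wf (e n)) ⬝ᵥ wf (e m)
      = if n = m then ((lam (e n) : ℝ) : ℂ) else 0 := by
    intro n m
    rw [hgram_full (e n) (e m)]
    by_cases hnm : n = m
    · subst hnm; simp
    · rw [if_neg (fun hc => hnm (he_inj hc)), if_neg hnm]
  obtain ⟨a, ha, hwa⟩ := orthScale hkN (fun n => wf (e n)) (fun n => lam (e n))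
    (fun n => hlam0 _) hgramk
  refine ⟨fun n i => U i (e n), a, fun n => lam (e n), ?_, ha, fun n => hlam0 _, ?_, ?_⟩
  · intro n m
    have h : star (fun i => U i (e n)) ⬝ᵥ (fun i => U i (e m))
        = ∑ i, starRingEnd ℂ (U i (e n)) * U i (e m) := by
      simp [dotProduct, Complex.star_def]
    rw [h, hUcol (e n) (e m)]
    by_cases hnm : n = m
    · subst hnm; simp
    · rw [if_neg (fun hc => hnm (he_inj hc)), if_neg hnm]
  · calc (∑ n, lam (e n)) = ∑ t ∈ T, lam t := hsumTR lam
      _ = ∑ t, lam t :=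
          Finset.sum_subset (Finset.subset_univ T) (fun t _ ht => hlam_out t ht)
      _ = 1 := hsum_lam
  · funext p
    obtain ⟨i, sj⟩ := p
    calc ψ (i, sj) = ∑ t, U i t * wf t sj := hrecon i sj
      _ = ∑ t ∈ T, U i t * wf t sj := by
          refine (Finset.sum_subset (Finset.subset_univ T) ?_).symm
          intro t _ ht
          rw [hzero_full t (hlam_out t ht)]
          simp
      _ = ∑ n, U i (e n) * wf (e n) sj := (hsumTC (fun t => U i t * wf t sj)).symm
      _ = ∑ n, (Real.sqrt (lam (e n)) : ℂ) * U i (e n) * a n sj := by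
          refine Finset.sum_congr rfl fun n _ => ?_
          have h := congrFun (hwa n) sj
          rw [h]
          ring

lemma herm_block (Λ : Matrix (Fin N) (Fin N) ℂ →ₗ[ℂ] Matrix (Fin N) (Fin N) ℂ)
    (hherm : HermPreserving (⇑Λ)) (ψ : Fin N × Fin N → ℂ) :
    (blockMap (⇑Λ) (outer ψ)).IsHermitian := by
  have hXji : ∀ i j : Fin N, (Matrix.of fun s t => outer ψ (j, s) (i, t))ᴴ
      = (Matrix.of fun s t => outer ψ (i, s) (j, t)) := by
    intro i j
    ext s t
    simp only [Matrix.conjTranspose_apply, Matrix.of_apply, outer]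
    simp [mul_comm]
  unfold Matrix.IsHermitian
  ext ⟨i, si⟩ ⟨j, tj⟩
  rw [Matrix.conjTranspose_apply]
  show star (blockMap (⇑Λ) (outer ψ) (j, tj) (i, si)) = blockMap (⇑Λ) (outer ψ) (i, si) (j, tj)
  show star (Λ (Matrix.of fun s t => outer ψ (j, s) (i, t)) tj si)
    = Λ (Matrix.of fun s t => outer ψ (i, s) (j, t)) si tj
  calc star (Λ (Matrix.of fun s t => outer ψ (j, s) (i, t)) tj si)
      = (Λ (Matrix.of fun s t => outer ψ (j, s) (i, t)))ᴴ si tj := rfl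
    _ = (Λ ((Matrix.of fun s t => outer ψ (j, s) (i, t))ᴴ)) si tj := by rw [hherm]
    _ = Λ (Matrix.of fun s t => outer ψ (i, s) (j, t)) si tj := by rw [hXji i j]

lemma backward_step (hkN : k ≤ N)
    (Λ : Matrix (Fin N) (Fin N) ℂ →ₗ[ℂ] Matrix (Fin N) (Fin N) ℂ)
    (hherm : HermPreserving (⇑Λ))
    (H : ∀ a b : Fin k → Fin N → ℂ, OrthonormalFam a → OrthonormalFam b →
        ∀ μ : Fin k → ℝ, (∀ i, 0 ≤ μ i) → (∑ i, μ i) = 1 →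
          (∑ n, ∑ m, ((Real.sqrt (μ n * μ m) : ℂ) * sesq Λ (a n) (a m) (b n) (b m))).im = 0 ∧
          0 ≤ (∑ n, ∑ m, ((Real.sqrt (μ n * μ m) : ℂ) * sesq Λ (a n) (a m) (b n) (b m))).re) :
    kPositive k (⇑Λ) := by
  intro ψ hunit hrank
  obtain ⟨d, a, μ, hd, ha, hμ0, hμsum, hψ⟩ := schmidt_decomp hkN ψ hunit hrank
  refine Matrix.PosSemidef.of_dotProduct_mulVec_nonneg (herm_block Λ hherm ψ) ?_
  intro v
  rw [hψ, Q_expand]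
  have hterm : ∀ n m : Fin k,
      ((Real.sqrt (μ n) : ℂ) * (Real.sqrt (μ m) : ℂ)) *
        sesq Λ (a n) (a m) (fun sj => ∑ i, starRingEnd ℂ (d n i) * v (i, sj))
          (fun sj => ∑ i, starRingEnd ℂ (d m i) * v (i, sj))
      = sesq Λ (a n) (a m)
          (((Real.sqrt (μ n) : ℝ) : ℂ) • fun sj => ∑ i, starRingEnd ℂ (d n i) * v (i, sj))
          (((Real.sqrt (μ m) : ℝ) : ℂ) • fun sj => ∑ i, starRingEnd ℂ (d m i) * v (i, sj)) := by
    intro n m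
    rw [sesq_smul3, sesq_smul4, Complex.conj_ofReal]
    ring
  rw [Finset.sum_congr rfl fun n _ => Finset.sum_congr rfl fun m _ => hterm n m]
  exact claim_pos hkN Λ H a ha
    (fun n => ((Real.sqrt (μ n) : ℝ) : ℂ) • fun sj => ∑ i, starRingEnd ℂ (d n i) * v (i, sj))

end UhlmannAux

/-- A Hermiticity-preserving linear map `Λ` is `k`-positive iff for all
orthonormal families `a`, `b` of size `k` and all Schmidt coefficients `μ` (nonnegative,
summing to 1), the sum `∑ n m, √(μ n · μ m) ⟨b n, Λ(|a n⟩⟨a m|) (b m)⟩` is a nonnegative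
real number. -/
theorem kPositive_iff_uhlmann {N k : ℕ} (hk : 1 ≤ k) (hkN : k ≤ N)
    (Λ : Matrix (Fin N) (Fin N) ℂ →ₗ[ℂ] Matrix (Fin N) (Fin N) ℂ)
    (hherm : HermPreserving (⇑Λ)) :
    kPositive k (⇑Λ) ↔
      ∀ a b : Fin k → Fin N → ℂ, OrthonormalFam a → OrthonormalFam b →
        ∀ μ : Fin k → ℝ, (∀ i, 0 ≤ μ i) → (∑ i, μ i) = 1 →
          (∑ n, ∑ m, ((Real.sqrt (μ n * μ m) : ℂ) *
            (star (b n) ⬝ᵥ (Λ (Matrix.vecMulVec (a n) (star (a m)))).mulVec (b m)))).im = 0 ∧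
          0 ≤ (∑ n, ∑ m, ((Real.sqrt (μ n * μ m) : ℂ) *
            (star (b n) ⬝ᵥ (Λ (Matrix.vecMulVec (a n) (star (a m)))).mulVec (b m)))).re := by
  constructor
  · intro hkp a b ha hb μ hμ hsum
    have h0 := UhlmannAux.forward_step hkN Λ hkp a b ha hb μ hμ hsum
    rw [Complex.nonneg_iff] at h0
    exact ⟨h0.2.symm, h0.1⟩
  · intro H
    exact UhlmannAux.backward_step hkN Λ hherm fun a b ha hb μ hμ hsum =>
      H a b ha hb μ hμ hsum
end

section
/- Let Λ : M_N(ℂ) → M_N(ℂ) be a k-positive Hermiticity-preserving linear map, and let Λ† be its adjoint with respect to the Hilbert–Schmidt inner product, i.e. Tr(A† Λ(B)) = Tr(Λ†(A†) B) for all A, B ∈ M_N(ℂ). Then Λ† is k-positive. -/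
open Matrix BigOperators
open scoped ComplexOrder

/-!
The quadratic form `⟨φ, (1 ⊗ Λ†)(|ψ⟩⟨ψ|) φ⟩` equals `⟨ψ, (1 ⊗ Λ)(|φ⟩⟨φ|) ψ⟩`. Write
`ψ = (M_ψ ⊗ 1) ω` with `ω = ∑ᵢ eᵢ ⊗ eᵢ`; since `1 ⊗ Λ` commutes with operators on the first
factor, the form becomes `⟨ω, (1 ⊗ Λ)(|χ⟩⟨χ|) ω⟩` with `χ = (M_ψ† ⊗ 1) φ`, whose Schmidt rank
`rank (M_ψ† M_φ)` is at most that of `ψ`. So `k`-positivity of `Λ` makes the form nonnegative,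
and over `ℂ` a matrix with nonnegative quadratic form is positive semidefinite.
-/

open scoped Kronecker

theorem Matrix.posSemidef_iff_forall_dotProduct_mulVec_nonneg {n : Type*} [Fintype n]
    {A : Matrix n n ℂ} : A.PosSemidef ↔ ∀ x, 0 ≤ star x ⬝ᵥ (A *ᵥ x) := by
  classical
  refine ⟨fun h => h.dotProduct_mulVec_nonneg, fun h => ?_⟩
  rw [← isPositive_toEuclideanLin_iff, LinearMap.isPositive_iff_complex]
  intro x
  have hx := h x.ofLp
  have hreal : star (star x.ofLp ⬝ᵥ A *ᵥ x.ofLp) = star x.ofLp ⬝ᵥ A *ᵥ x.ofLp :=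
    (IsSelfAdjoint.of_nonneg hx).star_eq
  rw [EuclideanSpace.inner_eq_star_dotProduct, toLpLin_apply, dotProduct_star,
    dotProduct_comm, hreal]
  exact ⟨Complex.conj_eq_iff_re.mp hreal, (Complex.nonneg_iff.mp hx).1⟩

section Outer

variable {α β γ : Type*}

theorem outer_smul (c : ℂ) (ψ : γ → ℂ) : outer (c • ψ) = (c * star c) • outer ψ := by
  ext x y
  simp only [outer, of_apply, Pi.smul_apply, smul_eq_mul, Matrix.smul_apply, star_mul']
  ring

theorem outer_mulVec_s11 [Fintype β] (M : Matrix α β ℂ) (ψ : β → ℂ) :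
    outer (M *ᵥ ψ) = M * outer ψ * Mᴴ := by
  change vecMulVec _ (star _) = M * vecMulVec ψ (star ψ) * Mᴴ
  rw [mul_vecMulVec, vecMulVec_mul, star_mulVec]

theorem schmidtRank_smul [Fintype β] {c : ℂ} (hc : c ≠ 0) (ψ : α × β → ℂ) :
    schmidtRank (c • ψ) = schmidtRank ψ :=
  rank_smul_of_mem_nonZeroDivisors (matOfVec ψ) (mem_nonZeroDivisors_of_ne_zero hc)

theorem matOfVec_kronecker_one_mulVec [Fintype α] [Fintype β] [DecidableEq β]
    (B : Matrix γ α ℂ) (ψ : α × β → ℂ) :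
    matOfVec ((B ⊗ₖ 1) *ᵥ ψ) = B * matOfVec ψ := by
  ext i s
  simp [matOfVec, mulVec, dotProduct, mul_apply, Fintype.sum_prod_type, one_apply]

theorem kronecker_one_mulVec_vec_one [Fintype α] [DecidableEq α] (ψ : α × α → ℂ) :
    (matOfVec ψ ⊗ₖ 1) *ᵥ vec (1 : Matrix α α ℂ) = ψ := by
  rw [kronecker_mulVec_vec, one_mul, one_mul]
  rfl

end Outer

section BlockMap

variable {γ : Type*} {n m : ℕ}

theorem blockMap_smul (Λ : Matrix (Fin n) (Fin n) ℂ →ₗ[ℂ] Matrix (Fin m) (Fin m) ℂ) (c : ℂ)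
    (X : Matrix (γ × Fin n) (γ × Fin n) ℂ) : blockMap Λ (c • X) = c • blockMap Λ X := by
  ext a b
  change Λ (c • of fun s t => X (a.1, s) (b.1, t)) a.2 b.2 = _
  rw [map_smul]
  rfl

variable [Fintype γ]

theorem blockMap_kronecker_one_mul (Λ : Matrix (Fin n) (Fin n) ℂ →ₗ[ℂ] Matrix (Fin m) (Fin m) ℂ)
    (B : Matrix γ γ ℂ) (X : Matrix (γ × Fin n) (γ × Fin n) ℂ) :
    blockMap Λ ((B ⊗ₖ 1) * X) = (B ⊗ₖ 1) * blockMap Λ X := by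
  ext ⟨i, s⟩ ⟨j, t⟩
  have hblock : (of fun s t => ∑ a, B i a * X (a, s) (j, t)) =
      ∑ a, B i a • of fun s t => X (a, s) (j, t) := by
    ext; simp only [of_apply, Matrix.sum_apply, Matrix.smul_apply, smul_eq_mul]
  simp only [blockMap, of_apply, mul_apply, kroneckerMap_apply, one_apply, mul_ite, mul_one,
    mul_zero, ite_mul, zero_mul, Fintype.sum_prod_type, Finset.sum_ite_eq, Finset.mem_univ,
    if_true]
  rw [hblock, map_sum, Matrix.sum_apply]
  simp only [map_smul, Matrix.smul_apply, smul_eq_mul]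

theorem blockMap_mul_kronecker_one (Λ : Matrix (Fin n) (Fin n) ℂ →ₗ[ℂ] Matrix (Fin m) (Fin m) ℂ)
    (B : Matrix γ γ ℂ) (X : Matrix (γ × Fin n) (γ × Fin n) ℂ) :
    blockMap Λ (X * (B ⊗ₖ 1)) = blockMap Λ X * (B ⊗ₖ 1) := by
  ext ⟨i, s⟩ ⟨j, t⟩
  have hblock : (of fun s t => ∑ a, B a j * X (i, s) (a, t)) =
      ∑ a, B a j • of fun s t => X (i, s) (a, t) := by
    ext; simp only [of_apply, Matrix.sum_apply, Matrix.smul_apply, smul_eq_mul]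
  simp only [blockMap, of_apply, mul_apply, kroneckerMap_apply, one_apply, mul_ite, mul_one,
    mul_zero, mul_comm, ite_mul, zero_mul, Fintype.sum_prod_type, Finset.sum_ite_eq',
    Finset.mem_univ, if_true]
  rw [hblock, map_sum, Matrix.sum_apply]
  simp only [map_smul, Matrix.smul_apply, smul_eq_mul]

theorem blockMap_outer_kronecker_one_mulVec
    (Λ : Matrix (Fin n) (Fin n) ℂ →ₗ[ℂ] Matrix (Fin m) (Fin m) ℂ)
    (B : Matrix γ γ ℂ) (ψ : γ × Fin n → ℂ) :
    blockMap Λ (outer ((B ⊗ₖ 1) *ᵥ ψ)) = (B ⊗ₖ 1) * blockMap Λ (outer ψ) * (Bᴴ ⊗ₖ 1) := by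
  rw [outer_mulVec_s11, conjTranspose_kronecker, conjTranspose_one, blockMap_mul_kronecker_one,
    blockMap_kronecker_one_mul]

theorem star_dotProduct_blockMap_outer (Λ : Matrix (Fin n) (Fin n) ℂ → Matrix (Fin m) (Fin m) ℂ)
    (ψ : γ × Fin n → ℂ) (φ : γ × Fin m → ℂ) :
    star φ ⬝ᵥ blockMap Λ (outer ψ) *ᵥ φ =
      ∑ i, ∑ j, (Λ (vecMulVec (matOfVec ψ i) (star (matOfVec ψ j))) *
        vecMulVec (matOfVec φ j) (star (matOfVec φ i))).trace := by
  simp only [dotProduct, mulVec, blockMap, outer, trace, diag, mul_apply, vecMulVec_apply,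
    Fintype.sum_prod_type, Finset.mul_sum, Pi.star_apply, of_apply]
  refine Finset.sum_congr rfl fun i _ => ?_
  rw [Finset.sum_comm]
  refine Finset.sum_congr rfl fun j _ => Finset.sum_congr rfl fun s _ =>
    Finset.sum_congr rfl fun t _ => ?_
  simp only [matOfVec, vecMulVec, of_apply, Pi.star_apply]
  ring

theorem star_dotProduct_blockMap_outer_adjoint
    {Λ : Matrix (Fin n) (Fin n) ℂ → Matrix (Fin m) (Fin m) ℂ}
    {Λd : Matrix (Fin m) (Fin m) ℂ → Matrix (Fin n) (Fin n) ℂ}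
    (hadj : ∀ X Y, (Λd X * Y).trace = (X * Λ Y).trace) (ψ : γ × Fin m → ℂ) (φ : γ × Fin n → ℂ) :
    star φ ⬝ᵥ blockMap Λd (outer ψ) *ᵥ φ = star ψ ⬝ᵥ blockMap Λ (outer φ) *ᵥ ψ := by
  rw [star_dotProduct_blockMap_outer, star_dotProduct_blockMap_outer, Finset.sum_comm]
  simp only [hadj, trace_mul_comm (vecMulVec (matOfVec ψ _) _)]

theorem star_dotProduct_blockMap_outer_kronecker_one_mulVec
    (Λ : Matrix (Fin n) (Fin n) ℂ →ₗ[ℂ] Matrix (Fin m) (Fin m) ℂ)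
    (B : Matrix γ γ ℂ) (φ : γ × Fin n → ℂ) (ω : γ × Fin m → ℂ) :
    star ((B ⊗ₖ 1) *ᵥ ω) ⬝ᵥ blockMap Λ (outer φ) *ᵥ ((B ⊗ₖ 1) *ᵥ ω) =
      star ω ⬝ᵥ blockMap Λ (outer ((Bᴴ ⊗ₖ 1) *ᵥ φ)) *ᵥ ω := by
  rw [blockMap_outer_kronecker_one_mulVec, conjTranspose_conjTranspose, ← conjTranspose_one,
    ← conjTranspose_kronecker]
  simp only [star_mulVec, dotProduct_mulVec, vecMul_vecMul, conjTranspose_one]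

end BlockMap

theorem kPositive.posSemidef_blockMap_outer {N k : ℕ}
    {Λ : Matrix (Fin N) (Fin N) ℂ →ₗ[ℂ] Matrix (Fin N) (Fin N) ℂ} (hΛ : kPositive k Λ)
    {χ : Fin N × Fin N → ℂ} (hχ : schmidtRank χ ≤ k) : (blockMap Λ (outer χ)).PosSemidef := by
  obtain rfl | hχ0 := eq_or_ne χ 0
  · have h0 : outer (0 : Fin N × Fin N → ℂ) = (0 : ℂ) • outer 0 := by ext; simp [outer]
    rw [h0, blockMap_smul, zero_smul]
    exact .zero
  set s : ℝ := ∑ x, Complex.normSq (χ x)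
  have hs : 0 < s := by
    obtain ⟨x, hx⟩ := Function.ne_iff.mp hχ0
    exact Finset.sum_pos' (fun x _ => Complex.normSq_nonneg _)
      ⟨x, Finset.mem_univ x, Complex.normSq_pos.mpr hx⟩
  set c : ℂ := (((√s)⁻¹ : ℝ) : ℂ)
  have hc : c ≠ 0 := by simp [c, (Real.sqrt_pos.mpr hs).ne']
  have hcc : c * star c = (s : ℂ)⁻¹ := by
    simp only [c, Complex.star_def, Complex.conj_ofReal]
    norm_cast
    rw [← mul_inv, Real.mul_self_sqrt hs.le]
  have hunit : IsUnitVec (c • χ) := by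
    have hnc : Complex.normSq c = s⁻¹ := by
      rw [Complex.normSq_ofReal, ← mul_inv, Real.mul_self_sqrt hs.le]
    simp only [IsUnitVec, Pi.smul_apply, smul_eq_mul, Complex.normSq_mul, ← Finset.mul_sum, hnc]
    exact inv_mul_cancel₀ hs.ne'
  have houter : outer χ = (s : ℂ) • outer (c • χ) := by
    rw [outer_smul, hcc, smul_smul, mul_inv_cancel₀ (by exact_mod_cast hs.ne'), one_smul]
  rw [houter, blockMap_smul]
  exact (hΛ _ hunit ((schmidtRank_smul hc χ).trans_le hχ)).smul (by exact_mod_cast hs.le)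

theorem adjoint_kPositive_general {N k : ℕ}
    (Λ Λd : Matrix (Fin N) (Fin N) ℂ →ₗ[ℂ] Matrix (Fin N) (Fin N) ℂ)
    (hadj : ∀ A B : Matrix (Fin N) (Fin N) ℂ, (Aᴴ * Λ B).trace = (Λd Aᴴ * B).trace)
    (hpos : kPositive k (⇑Λ)) :
    kPositive k (⇑Λd) := by
  intro ψ _ hψ
  have hadj' : ∀ X Y, (Λd X * Y).trace = (X * Λ Y).trace := fun X Y => by
    simpa using (hadj Xᴴ Y).symm
  rw [posSemidef_iff_forall_dotProduct_mulVec_nonneg]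
  intro φ
  rw [star_dotProduct_blockMap_outer_adjoint hadj', ← kronecker_one_mulVec_vec_one ψ,
    star_dotProduct_blockMap_outer_kronecker_one_mulVec]
  refine (hpos.posSemidef_blockMap_outer ?_).dotProduct_mulVec_nonneg _
  calc schmidtRank (((matOfVec ψ)ᴴ ⊗ₖ 1) *ᵥ φ) = ((matOfVec ψ)ᴴ * matOfVec φ).rank := by
        rw [schmidtRank, matOfVec_kronecker_one_mulVec]
    _ ≤ (matOfVec ψ)ᴴ.rank := rank_mul_le_left _ _
    _ = schmidtRank ψ := rank_conjTranspose _
    _ ≤ k := hψ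

/-- If `Λ` is a `k`-positive Hermiticity-preserving linear map on `M_N(ℂ)`
and `Λ†` is its adjoint with respect to the Hilbert–Schmidt inner product
(`Tr(A† Λ(B)) = Tr(Λ†(A†) B)` for all `A, B`), then `Λ†` is `k`-positive. -/
theorem adjoint_kPositive {N k : ℕ} (hk : 1 ≤ k)
    (Λ Λd : Matrix (Fin N) (Fin N) ℂ →ₗ[ℂ] Matrix (Fin N) (Fin N) ℂ)
    (hherm : HermPreserving (⇑Λ))
    (hadj : ∀ A B : Matrix (Fin N) (Fin N) ℂ, (Aᴴ * Λ B).trace = (Λd Aᴴ * B).trace)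
    (hpos : kPositive k (⇑Λ)) :
    kPositive k (⇑Λd) :=
  adjoint_kPositive_general Λ Λd hadj hpos
end
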